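/- arXiv:1802.03035 — 3 statements merged into one kernel-verified Lean document; each statement's English description precedes it below -/
import Mathlib

section
/- Let S = k[x₁,…,xₙ], write S̄ = k[x₁,…,x_{n-1}], and decompose a monomial ideal I ⊆ S as I = I₀ ⊕ I₁xₙ ⊕ I₂xₙ² ⊕ ⋯ where each Iᵢ ⊆ S̄ is a monomial ideal. Let d be a degree sequence with ℘ = (x₁^{d₁},…,xₙ^{dₙ}). Then I is d-stable-plus-powers if and only if ℘ ⊆ I and m_{S̄}·Iᵢ ⊆ I_{i-1} for all 0 < i < dₙ, where m_{S̄} is the maximal homogeneous ideal of S̄. -/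
open MvPolynomial

/-- total degree of an exponent vector -/
def expDeg {n : ℕ} (m : Fin n →₀ ℕ) : ℕ := m.sum fun _ e => e

/-- `u >_lex v` for the lexicographic order with `x₁ > x₂ > ⋯ > xₙ`
(variables indexed so that `X 0` is the largest). -/
def LexGT {n : ℕ} (u v : Fin n →₀ ℕ) : Prop :=
  ∃ i : Fin n, v i < u i ∧ ∀ l : Fin n, l < i → u l = v l

/-- A monomial ideal: an ideal generated by monomials. -/
def IsMonomialIdeal {k : Type*} [Field k] {n : ℕ}
    (I : Ideal (MvPolynomial (Fin n) k)) : Prop :=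
  ∃ A : Set (Fin n →₀ ℕ), I = Ideal.span ((fun m => (monomial m (1 : k))) '' A)

/-- A lex ideal: a monomial ideal such that in each degree its monomials form an
initial lex segment. -/
def IsLexIdeal {k : Type*} [Field k] {n : ℕ}
    (I : Ideal (MvPolynomial (Fin n) k)) : Prop :=
  IsMonomialIdeal I ∧
    ∀ u v : Fin n →₀ ℕ, expDeg u = expDeg v → LexGT u v →
      monomial v (1 : k) ∈ I → monomial u (1 : k) ∈ I

/-- An `xₙ`-stable monomial ideal (in `n+1` variables `x₁,…,x_{n+1}`,
with `xₙ` interpreted as the last variable). -/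
def IsXnStable {k : Type*} [Field k] {n : ℕ}
    (I : Ideal (MvPolynomial (Fin (n + 1)) k)) : Prop :=
  IsMonomialIdeal I ∧
    ∀ u : Fin (n + 1) →₀ ℕ, monomial u (1 : k) ∈ I → 1 ≤ u (Fin.last n) →
      ∀ i : Fin (n + 1), i < Fin.last n →
        monomial (u + Finsupp.single i 1 - Finsupp.single (Fin.last n) 1) (1 : k) ∈ I

/-- A degree sequence: entries in `ℕ ∪ {∞}`, at least 1, weakly increasing. -/
def IsDegSeq {n : ℕ} (d : Fin n → ℕ∞) : Prop :=
  (∀ i, 1 ≤ d i) ∧ Monotone d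

/-- The ideal `(x₁^{d₁}, …, xₙ^{dₙ})`, where `xᵢ^∞ = 0` (so infinite entries
contribute nothing). -/
noncomputable def powersIdeal {n : ℕ} (k : Type*) [Field k] (d : Fin n → ℕ∞) :
    Ideal (MvPolynomial (Fin n) k) :=
  Ideal.span {f | ∃ (i : Fin n) (e : ℕ), d i = (e : ℕ∞) ∧
    f = monomial (Finsupp.single i e) (1 : k)}

/-- A `d`-lex-plus-powers ideal. -/
def IsLPP {k : Type*} [Field k] {n : ℕ} (d : Fin n → ℕ∞)
    (I : Ideal (MvPolynomial (Fin n) k)) : Prop :=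
  ∃ L, IsLexIdeal L ∧ I = L ⊔ powersIdeal k d

/-- A `d`-stable-plus-powers ideal. -/
def IsSPP {k : Type*} [Field k] {n : ℕ} (d : Fin (n + 1) → ℕ∞)
    (I : Ideal (MvPolynomial (Fin (n + 1)) k)) : Prop :=
  ∃ J, IsXnStable J ∧ I = J ⊔ powersIdeal k d

/-- Hilbert function of a (homogeneous) ideal: `HF(I; j) = dim_k [I]_j`. -/
noncomputable def hfI {k : Type*} [Field k] {n : ℕ}
    (I : Ideal (MvPolynomial (Fin n) k)) (j : ℕ) : ℕ :=
  Module.finrank k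
    ↥(I.restrictScalars k ⊓ homogeneousSubmodule (Fin n) k j)

/-- Hilbert function of the quotient: `HF(S/I; j) = dim_k [S/I]_j`. -/
noncomputable def hfQ {k : Type*} [Field k] {n : ℕ}
    (I : Ideal (MvPolynomial (Fin n) k)) (j : ℕ) : ℕ :=
  Module.finrank k
    (↥(homogeneousSubmodule (Fin n) k j) ⧸
      Submodule.comap (homogeneousSubmodule (Fin n) k j).subtype (I.restrictScalars k))

/-- An ideal is homogeneous iff it contains all homogeneous components of its
elements. -/
def IsHomogeneousIdeal {k : Type*} [Field k] {n : ℕ}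
    (I : Ideal (MvPolynomial (Fin n) k)) : Prop :=
  ∀ f ∈ I, ∀ j : ℕ, homogeneousComponent j f ∈ I

/-- The inclusion `S̄ = k[x₁,…,xₙ] → S = k[x₁,…,x_{n+1}]`. -/
noncomputable def inclHom (k : Type*) [Field k] (n : ℕ) :
    MvPolynomial (Fin n) k →+* MvPolynomial (Fin (n + 1)) k :=
  (MvPolynomial.rename (Fin.castSucc : Fin n → Fin (n + 1))).toRingHom

/-- The `i`-th slice `Iᵢ ⊆ S̄` in the decomposition `I = ⊕ᵢ Iᵢ xₙⁱ`
of a monomial ideal `I ⊆ S = S̄[xₙ]`, defined as `(I : xₙⁱ) ∩ S̄`. -/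
noncomputable def idealSlice {k : Type*} [Field k] {n : ℕ}
    (I : Ideal (MvPolynomial (Fin (n + 1)) k)) (i : ℕ) :
    Ideal (MvPolynomial (Fin n) k) :=
  Ideal.comap (inclHom k n)
    (Submodule.colon I (Ideal.span {(X (Fin.last n) : MvPolynomial (Fin (n + 1)) k) ^ i}))

/-- The maximal homogeneous ideal `(x₁,…,xₙ)` of a polynomial ring. -/
noncomputable def maxIdeal (k : Type*) [Field k] (n : ℕ) :
    Ideal (MvPolynomial (Fin n) k) :=
  Ideal.span (Set.range (X : Fin n → MvPolynomial (Fin n) k))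

/-! In the slice decomposition, `m_{S̄} · Iᵢ ⊆ I_{i-1}` says exactly that the exchange
`m ↦ xⱼ m / xₙ` of `xₙ`-stability keeps the monomials of `I` of `xₙ`-degree `i` inside `I`.
If `I = J + ℘` with `J` stable, a monomial of `℘` of `xₙ`-degree `< dₙ` is divisible by some
`xₗ^{dₗ}` with `l ≠ n`, which the exchange does not disturb. Conversely, the monomials of `I`
of `xₙ`-degree `< dₙ` generate an `xₙ`-stable ideal `J`, and every other monomial of `I` lies in
`(xₙ^{dₙ}) ⊆ ℘`, so `I = J + ℘`. -/

open Finsupp (single mapDomain)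

section MonomialIdeal

theorem monomial_mem_span_monomial_image_iff {R σ : Type*} [CommSemiring R] [Nontrivial R]
    {A : Set (σ →₀ ℕ)} {u : σ →₀ ℕ} :
    monomial u (1 : R) ∈ Ideal.span ((fun a => monomial a (1 : R)) '' A) ↔ ∃ a ∈ A, a ≤ u := by
  classical
  simp [mem_ideal_span_monomial_image, support_monomial]

variable {k : Type*} [Field k] {n : ℕ}

theorem IsMonomialIdeal.monomial_mem_of_mem {I : Ideal (MvPolynomial (Fin n) k)}
    (hI : IsMonomialIdeal I) {f : MvPolynomial (Fin n) k} (hf : f ∈ I) {u : Fin n →₀ ℕ}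
    (hu : u ∈ f.support) : monomial u (1 : k) ∈ I := by
  obtain ⟨A, rfl⟩ := hI
  obtain ⟨a, ha, hau⟩ := mem_ideal_span_monomial_image.1 hf u hu
  exact monomial_mem_span_monomial_image_iff.2 ⟨a, ha, hau⟩

theorem isMonomialIdeal_of_monomial_mem {I : Ideal (MvPolynomial (Fin n) k)}
    (h : ∀ f ∈ I, ∀ u ∈ f.support, monomial u (1 : k) ∈ I) : IsMonomialIdeal I := by
  refine ⟨{u | monomial u (1 : k) ∈ I}, le_antisymm (fun f hf => ?_) ?_⟩
  · exact mem_ideal_span_monomial_image.2 fun u hu => ⟨u, h f hf u hu, le_rfl⟩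
  · exact Ideal.span_le.2 (by rintro _ ⟨u, hu, rfl⟩; exact hu)

theorem IsMonomialIdeal.le_iff {I K : Ideal (MvPolynomial (Fin n) k)} (hI : IsMonomialIdeal I) :
    I ≤ K ↔ ∀ u, monomial u (1 : k) ∈ I → monomial u (1 : k) ∈ K := by
  refine ⟨fun h u hu => h hu, fun h => ?_⟩
  obtain ⟨A, rfl⟩ := hI
  exact Ideal.span_le.2 (by rintro _ ⟨u, hu, rfl⟩; exact h u (Ideal.subset_span ⟨u, hu, rfl⟩))

theorem IsMonomialIdeal.monomial_mem_sup_iff {I J : Ideal (MvPolynomial (Fin n) k)}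
    (hI : IsMonomialIdeal I) (hJ : IsMonomialIdeal J) {u : Fin n →₀ ℕ} :
    monomial u (1 : k) ∈ I ⊔ J ↔ monomial u (1 : k) ∈ I ∨ monomial u (1 : k) ∈ J := by
  obtain ⟨A, rfl⟩ := hI
  obtain ⟨B, rfl⟩ := hJ
  simp only [← Ideal.span_union, ← Set.image_union, monomial_mem_span_monomial_image_iff,
    Set.mem_union, or_and_right, exists_or]

theorem powersIdeal_eq_span (d : Fin n → ℕ∞) :
    powersIdeal k d = Ideal.span ((fun a => monomial a (1 : k)) ''
      {a | ∃ (i : Fin n) (e : ℕ), d i = e ∧ a = single i e}) := by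
  rw [powersIdeal]
  congr 1
  ext f
  simp [eq_comm]

theorem isMonomialIdeal_powersIdeal (d : Fin n → ℕ∞) : IsMonomialIdeal (powersIdeal k d) :=
  ⟨_, powersIdeal_eq_span d⟩

theorem monomial_mem_powersIdeal_iff {d : Fin n → ℕ∞} {u : Fin n →₀ ℕ} :
    monomial u (1 : k) ∈ powersIdeal k d ↔ ∃ (i : Fin n) (e : ℕ), d i = e ∧ e ≤ u i := by
  simp [powersIdeal_eq_span, monomial_mem_span_monomial_image_iff, Finsupp.single_le_iff]

end MonomialIdeal

section Slice

variable {k : Type*} [Field k] {n : ℕ}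

theorem mapDomain_castSucc_apply_last (v : Fin n →₀ ℕ) :
    mapDomain Fin.castSucc v (Fin.last n) = 0 :=
  Finsupp.mapDomain_of_notMem_range _ _ fun ⟨j, hj⟩ => (Fin.castSucc_lt_last j).ne hj

theorem exists_mapDomain_castSucc_add_single_last (w : Fin (n + 1) →₀ ℕ) :
    ∃ v : Fin n →₀ ℕ, mapDomain Fin.castSucc v + single (Fin.last n) (w (Fin.last n)) = w := by
  refine ⟨w.comapDomain Fin.castSucc (Fin.castSucc_injective n).injOn, ?_⟩
  ext x
  induction x using Fin.lastCases with
  | last => simp [mapDomain_castSucc_apply_last]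
  | cast j =>
    simp [Finsupp.mapDomain_apply (Fin.castSucc_injective n)]

theorem mem_idealSlice_iff {I : Ideal (MvPolynomial (Fin (n + 1)) k)}
    {f : MvPolynomial (Fin n) k} {i : ℕ} :
    f ∈ idealSlice I i ↔ rename Fin.castSucc f * monomial (single (Fin.last n) i) 1 ∈ I := by
  rw [idealSlice, Ideal.mem_comap, ← Ideal.submodule_span_eq,
    Submodule.mem_colon_span_singleton, smul_eq_mul, X_pow_eq_monomial]
  rfl

theorem monomial_mem_idealSlice_iff {I : Ideal (MvPolynomial (Fin (n + 1)) k)}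
    {v : Fin n →₀ ℕ} {i : ℕ} :
    monomial v (1 : k) ∈ idealSlice I i ↔
      monomial (mapDomain Fin.castSucc v + single (Fin.last n) i) (1 : k) ∈ I := by
  rw [mem_idealSlice_iff, rename_monomial, monomial_mul, mul_one]

theorem IsMonomialIdeal.idealSlice {I : Ideal (MvPolynomial (Fin (n + 1)) k)}
    (hI : IsMonomialIdeal I) (i : ℕ) : IsMonomialIdeal (idealSlice I i) := by
  refine isMonomialIdeal_of_monomial_mem fun f hf v hv => monomial_mem_idealSlice_iff.2 ?_
  refine hI.monomial_mem_of_mem (mem_idealSlice_iff.1 hf) ?_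
  rwa [MvPolynomial.mem_support_iff, coeff_mul_monomial, mul_one,
    coeff_rename_mapDomain _ (Fin.castSucc_injective n), ← MvPolynomial.mem_support_iff]

theorem IsMonomialIdeal.maxIdeal_mul_le_iff {J K : Ideal (MvPolynomial (Fin n) k)}
    (hJ : IsMonomialIdeal J) :
    maxIdeal k n * J ≤ K ↔
      ∀ (j : Fin n) (u : Fin n →₀ ℕ), monomial u (1 : k) ∈ J →
        monomial (u + single j 1) (1 : k) ∈ K := by
  have hX : ∀ (j : Fin n) (u : Fin n →₀ ℕ),
      X j * monomial u (1 : k) = monomial (u + single j 1) 1 := by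
    intro j u
    rw [X, monomial_mul, mul_one, add_comm]
  refine ⟨fun h j u hu => hX j u ▸ h (Ideal.mul_mem_mul (Ideal.subset_span ⟨j, rfl⟩) hu),
    fun h => ?_⟩
  obtain ⟨A, rfl⟩ := hJ
  rw [maxIdeal, Ideal.span_mul_span', Ideal.span_le]
  rintro _ ⟨_, ⟨j, rfl⟩, _, ⟨u, hu, rfl⟩, rfl⟩
  simpa only [hX, SetLike.mem_coe] using h j u (Ideal.subset_span ⟨u, hu, rfl⟩)

end Slice

section StableBelow

variable {k : Type*} [Field k] {n : ℕ}

/-- `xₙ`-stability for the monomials of `xₙ`-degree less than `b`, phrased without truncated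
subtraction: `w · xₙ ∈ I` implies `w · xⱼ ∈ I`. -/
def IsXnStableBelow (b : ℕ∞) (I : Ideal (MvPolynomial (Fin (n + 1)) k)) : Prop :=
  ∀ w : Fin (n + 1) →₀ ℕ, ((w (Fin.last n) + 1 : ℕ) : ℕ∞) < b →
    monomial (w + single (Fin.last n) 1) (1 : k) ∈ I →
      ∀ j : Fin n, monomial (w + single (Fin.castSucc j) 1) (1 : k) ∈ I

theorem maxIdeal_mul_idealSlice_succ_le_iff {I : Ideal (MvPolynomial (Fin (n + 1)) k)}
    (hI : IsMonomialIdeal I) (i : ℕ) :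
    maxIdeal k n * idealSlice I (i + 1) ≤ idealSlice I i ↔
      ∀ w : Fin (n + 1) →₀ ℕ, w (Fin.last n) = i →
        monomial (w + single (Fin.last n) 1) (1 : k) ∈ I →
          ∀ j : Fin n, monomial (w + single (Fin.castSucc j) 1) (1 : k) ∈ I := by
  have hsplit : ∀ (v : Fin n →₀ ℕ) (j : Fin n),
      mapDomain Fin.castSucc v + single (Fin.last n) (i + 1) =
          (mapDomain Fin.castSucc v + single (Fin.last n) i) + single (Fin.last n) 1 ∧
        mapDomain Fin.castSucc (v + single j 1) + single (Fin.last n) i =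
          (mapDomain Fin.castSucc v + single (Fin.last n) i) + single (Fin.castSucc j) 1 := by
    intro v j
    rw [Finsupp.single_add, Finsupp.mapDomain_add, Finsupp.mapDomain_single]
    exact ⟨(add_assoc ..).symm, add_right_comm ..⟩
  rw [(hI.idealSlice _).maxIdeal_mul_le_iff]
  simp only [monomial_mem_idealSlice_iff]
  constructor
  · intro h w hwi hw j
    obtain ⟨v, hv⟩ := exists_mapDomain_castSucc_add_single_last w
    rw [hwi] at hv
    subst hv
    rw [← (hsplit v j).1] at hw
    rw [← (hsplit v j).2]
    exact h j v hw
  · intro h j v hv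
    rw [(hsplit v j).1] at hv
    rw [(hsplit v j).2]
    exact h _ (by simp [mapDomain_castSucc_apply_last]) hv j

theorem isXnStableBelow_iff_slices {I : Ideal (MvPolynomial (Fin (n + 1)) k)}
    (hI : IsMonomialIdeal I) (b : ℕ∞) :
    IsXnStableBelow b I ↔
      ∀ i : ℕ, 0 < i → (i : ℕ∞) < b →
        maxIdeal k n * idealSlice I i ≤ idealSlice I (i - 1) := by
  constructor
  · rintro h (_ | i) hi hib
    · exact absurd hi (lt_irrefl 0)
    · exact (maxIdeal_mul_idealSlice_succ_le_iff hI i).2 fun w hw => h w (hw ▸ hib)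
  · intro h w hwb
    exact (maxIdeal_mul_idealSlice_succ_le_iff hI _).1 (h _ (Nat.succ_pos _) hwb) w rfl

theorem isXnStable_iff {J : Ideal (MvPolynomial (Fin (n + 1)) k)} :
    IsXnStable J ↔ IsMonomialIdeal J ∧ IsXnStableBelow ⊤ J := by
  refine and_congr_right fun _ => ⟨fun h w _ hw j => ?_, fun h u hu hu1 i hi => ?_⟩
  · have := h _ hw (by simp) _ (Fin.castSucc_lt_last j)
    rwa [add_right_comm, add_tsub_cancel_right] at this
  · obtain ⟨w, rfl⟩ : ∃ w, u = w + single (Fin.last n) 1 :=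
      ⟨_, (tsub_add_cancel_of_le (Finsupp.single_le_iff.2 hu1)).symm⟩
    rw [add_right_comm, add_tsub_cancel_right, ← Fin.castSucc_castPred i hi.ne]
    exact h w (ENat.natCast_lt_top _) hu _

theorem IsXnStableBelow.sup_powersIdeal {J : Ideal (MvPolynomial (Fin (n + 1)) k)}
    (hJ : IsMonomialIdeal J) (hstab : IsXnStableBelow ⊤ J) (d : Fin (n + 1) → ℕ∞) :
    IsXnStableBelow (d (Fin.last n)) (J ⊔ powersIdeal k d) := by
  intro w hwd hw j
  rcases (hJ.monomial_mem_sup_iff (isMonomialIdeal_powersIdeal d)).1 hw with hwJ | hwP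
  · exact Ideal.mem_sup_left (hstab w (ENat.natCast_lt_top _) hwJ j)
  · obtain ⟨l, e, hl, hle⟩ := monomial_mem_powersIdeal_iff.1 hwP
    refine Ideal.mem_sup_right (monomial_mem_powersIdeal_iff.2 ⟨l, e, hl, ?_⟩)
    have hl_ne : l ≠ Fin.last n := by
      rintro rfl
      rw [hl, Nat.cast_lt] at hwd
      simp only [Finsupp.coe_add, Pi.add_apply, Finsupp.single_eq_same] at hle
      omega
    simp only [Finsupp.add_apply, Finsupp.single_apply, hl_ne.symm, if_false, add_zero] at hle
    exact hle.trans le_self_add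

noncomputable def xnTruncation (b : ℕ∞) (I : Ideal (MvPolynomial (Fin (n + 1)) k)) :
    Ideal (MvPolynomial (Fin (n + 1)) k) :=
  Ideal.span ((fun a => monomial a (1 : k)) ''
    {a | monomial a (1 : k) ∈ I ∧ (a (Fin.last n) : ℕ∞) < b})

theorem IsXnStableBelow.isXnStable_xnTruncation {b : ℕ∞}
    {I : Ideal (MvPolynomial (Fin (n + 1)) k)} (hstab : IsXnStableBelow b I) :
    IsXnStable (xnTruncation b I) := by
  refine isXnStable_iff.2 ⟨⟨_, rfl⟩, fun w _ hw j => ?_⟩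
  obtain ⟨a, ⟨haI, hab⟩, haw⟩ := monomial_mem_span_monomial_image_iff.1 hw
  refine monomial_mem_span_monomial_image_iff.2 ?_
  by_cases hlast : a (Fin.last n) ≤ w (Fin.last n)
  · refine ⟨a, ⟨haI, hab⟩, le_trans (Finsupp.le_def.2 fun x => ?_) le_self_add⟩
    rcases eq_or_ne x (Fin.last n) with rfl | hx
    · exact hlast
    · simpa [Finsupp.single_apply, hx.symm] using Finsupp.le_def.1 haw x
  · obtain ⟨a, rfl⟩ : ∃ a₀, a = a₀ + single (Fin.last n) 1 :=
      ⟨_, (tsub_add_cancel_of_le (Finsupp.single_le_iff.2 (by omega))).symm⟩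
    simp only [Finsupp.add_apply, Finsupp.single_eq_same] at hab
    refine ⟨a + single (Fin.castSucc j) 1, ⟨hstab a (by exact_mod_cast hab) haI j, ?_⟩,
      add_le_add ((add_le_add_iff_right _).1 haw) le_rfl⟩
    simp only [Finsupp.add_apply, Finsupp.single_apply, (Fin.castSucc_lt_last j).ne, if_false,
      add_zero]
    exact lt_of_le_of_lt (by simp) hab

theorem xnTruncation_sup_powersIdeal {d : Fin (n + 1) → ℕ∞}
    {I : Ideal (MvPolynomial (Fin (n + 1)) k)} (hI : IsMonomialIdeal I)
    (hP : powersIdeal k d ≤ I) : xnTruncation (d (Fin.last n)) I ⊔ powersIdeal k d = I := by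
  refine le_antisymm (sup_le (Ideal.span_le.2 ?_) hP) (hI.le_iff.2 fun w hw => ?_)
  · rintro _ ⟨a, ⟨ha, -⟩, rfl⟩
    exact ha
  by_cases hwd : (w (Fin.last n) : ℕ∞) < d (Fin.last n)
  · exact Ideal.mem_sup_left (Ideal.subset_span ⟨w, ⟨hw, hwd⟩, rfl⟩)
  · rw [not_lt] at hwd
    obtain ⟨e, he⟩ := ENat.ne_top_iff_exists.1 (ne_top_of_le_ne_top (ENat.natCast_ne_top _) hwd)
    rw [← he, Nat.cast_le] at hwd
    exact Ideal.mem_sup_right (monomial_mem_powersIdeal_iff.2 ⟨_, e, he.symm, hwd⟩)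

end StableBelow

theorem isSPP_iff_slices_general
    {k : Type*} [Field k] {n : ℕ} (d : Fin (n + 1) → ℕ∞)
    (I : Ideal (MvPolynomial (Fin (n + 1)) k)) (hI : IsMonomialIdeal I) :
    IsSPP d I ↔
      (powersIdeal k d ≤ I ∧
        ∀ i : ℕ, 0 < i → (i : ℕ∞) < d (Fin.last n) →
          maxIdeal k n * idealSlice I i ≤ idealSlice I (i - 1)) := by
  rw [← isXnStableBelow_iff_slices hI]
  constructor
  · rintro ⟨J, hJ, rfl⟩
    obtain ⟨hJ, hstab⟩ := isXnStable_iff.1 hJ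
    exact ⟨le_sup_right, hstab.sup_powersIdeal hJ d⟩
  · rintro ⟨hP, hstab⟩
    exact ⟨_, hstab.isXnStable_xnTruncation, (xnTruncation_sup_powersIdeal hI hP).symm⟩

/-- A monomial ideal `I ⊆ S = k[x₁,…,x_{n+1}]` is
`d`-stable-plus-powers if and only if `℘ = (x₁^{d₁},…,x_{n+1}^{d_{n+1}}) ⊆ I` and
`m_{S̄} · Iᵢ ⊆ I_{i-1}` for all `0 < i < d_{n+1}`, where `Iᵢ ⊆ S̄ = k[x₁,…,xₙ]`
are the components of the decomposition `I = ⊕ᵢ Iᵢ x_{n+1}ⁱ`. -/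
theorem isSPP_iff_slices
    {k : Type*} [Field k] {n : ℕ} (d : Fin (n + 1) → ℕ∞) (hd : IsDegSeq d)
    (I : Ideal (MvPolynomial (Fin (n + 1)) k)) (hI : IsMonomialIdeal I) :
    IsSPP d I ↔
      (powersIdeal k d ≤ I ∧
        ∀ i : ℕ, 0 < i → (i : ℕ∞) < d (Fin.last n) →
          maxIdeal k n * idealSlice I i ≤ idealSlice I (i - 1)) :=
  isSPP_iff_slices_general d I hI
end

section
/- Let S = k[x₁,…,xₙ] over an infinite field, let f₁,…,f_{n-1} be a homogeneous regular sequence of degrees d₁ ≤ ⋯ ≤ d_{n-1}, let ℓ be a general linear form, and let fₙ ∈ S be any homogeneous form of degree dₙ > Σ_{j=1}^{n-1}(d_j - 1) such that f₁,…,fₙ is a regular sequence. Then fₙ ∈ (f₁,…,f_{n-1}, ℓ); consequently there exists a form g of degree dₙ - 1 and a form fₙ' with fₙ' = ℓ·g modulo (f₁,…,f_{n-1}) such that f₁,…,f_{n-1},fₙ' is a regular sequence generating the same ideal (f₁,…,fₙ) modulo (f₁,…,f_{n-1}). -/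
/-!
Appending `ℓ` to `f` gives a homogeneous regular sequence `G` of `n + 1` forms, of degrees `E`,
in `n + 1` variables. Adding a homogeneous nonzerodivisor of degree `e` to a homogeneous ideal `J`
replaces the Hilbert function `h` of `S ⧸ J` by `j ↦ h j - h (j - e)`, and the number of monomials
of degree `j` whose exponents are `< E t` at the variables `t` considered so far obeys the same
recursion. Hence `S ⧸ (G)` has Hilbert function the number of monomials of degree `j` with every
exponent `< E t`, which vanishes for `j > ∑ (E t - 1)`: every form of such a degree lies in
`(f, ℓ)`. Writing `fn = a + ℓ c` with `a ∈ (f)` and taking components of degree `D` gives `g`.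
-/

open MvPolynomial

namespace Finsupp

variable {σ : Type*}

noncomputable def boundedMonomialCount (E : σ → ℕ) (s : Set σ) (j : ℕ) : ℕ :=
  Nat.card {m : σ →₀ ℕ // m.degree = j ∧ ∀ t ∈ s, m t < E t}

variable (E : σ → ℕ)

lemma boundedMonomialCount_empty (j : ℕ) :
    boundedMonomialCount E ∅ j = Nat.card {m : σ →₀ ℕ // m.degree = j} := by
  simp [boundedMonomialCount]

lemma boundedMonomialCount_insert_of_lt {s : Set σ} {i : σ} {j : ℕ} (hj : j < E i) :
    boundedMonomialCount E (insert i s) j = boundedMonomialCount E s j :=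
  Nat.card_congr <| Equiv.subtypeEquivRight fun m => by
    simp only [Set.forall_mem_insert]
    exact ⟨fun h => ⟨h.1, h.2.2⟩, fun h => ⟨h.1, (le_degree i m).trans_lt (h.1 ▸ hj), h.2⟩⟩

lemma boundedMonomialCount_insert_add [Finite σ] {s : Set σ} {i : σ} (hi : i ∉ s) {j : ℕ}
    (hj : E i ≤ j) :
    boundedMonomialCount E (insert i s) j + boundedMonomialCount E s (j - E i) =
      boundedMonomialCount E s j := by
  set P : (σ →₀ ℕ) → Prop := fun m => m.degree = j ∧ ∀ t ∈ s, m t < E t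
  have : Finite {m // P m} :=
    (finite_of_degree_eq (σ := σ) j).subset (fun m hm => hm.1) |>.to_subtype
  have small : {m : {m // P m} // m.1 i < E i} ≃
      {m : σ →₀ ℕ // m.degree = j ∧ ∀ t ∈ insert i s, m t < E t} :=
    (Equiv.subtypeSubtypeEquivSubtypeInter P (fun m => m i < E i)).trans <|
      Equiv.subtypeEquivRight fun m => by
        simp only [Set.forall_mem_insert, P]
        tauto
  have single_apply_of_mem {t : σ} (ht : t ∈ s) : single i (E i) t = 0 :=
    single_eq_of_ne (ne_of_mem_of_not_mem ht hi)
  -- division by `xᵢ ^ E i`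
  have large : {m : {m // P m} // ¬ m.1 i < E i} ≃
      {m : σ →₀ ℕ // m.degree = j - E i ∧ ∀ t ∈ s, m t < E t} :=
    { toFun m := ⟨m.1.1 - single i (E i), by
        have hsub := congrArg degree (tsub_add_cancel_of_le (single_le_iff.2 (not_lt.1 m.2)))
        rw [map_add, degree_single, m.1.2.1] at hsub
        refine ⟨by omega, fun t ht => ?_⟩
        simpa [single_apply_of_mem ht] using m.1.2.2 t ht⟩
      invFun m := ⟨⟨m.1 + single i (E i), by rw [map_add, degree_single, m.2.1]; omega,
        fun t ht => by simpa [single_apply_of_mem ht] using m.2.2 t ht⟩, by simp⟩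
      left_inv m := by
        ext1; ext1
        exact tsub_add_cancel_of_le (single_le_iff.2 (not_lt.1 m.2))
      right_inv m := by
        ext1
        exact add_tsub_cancel_right _ _ }
  rw [boundedMonomialCount, boundedMonomialCount, boundedMonomialCount,
    ← Nat.card_congr small, ← Nat.card_congr large, ← Nat.card_sum]
  exact Nat.card_congr (Equiv.sumCompl _)

lemma boundedMonomialCount_univ_eq_zero [Fintype σ] {D : ℕ} (hD : ∑ t, (E t - 1) < D) :
    boundedMonomialCount E Set.univ D = 0 := by
  refine @Nat.card_of_isEmpty _ ⟨fun ⟨m, hdeg, hlt⟩ => ?_⟩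
  have : m.degree ≤ ∑ t, (E t - 1) := by
    rw [degree_eq_sum]
    exact Finset.sum_le_sum fun t _ => Nat.le_sub_one_of_lt (hlt t trivial)
  omega

end Finsupp

attribute [local instance] MvPolynomial.gradedAlgebra

namespace MvPolynomial

section CommSemiring

variable {σ R : Type*} [CommSemiring R] {g : MvPolynomial σ R} {e j : ℕ}

lemma homogeneousComponent_mul_of_le (hg : g.IsHomogeneous e) (b : MvPolynomial σ R)
    (h : e ≤ j) : homogeneousComponent j (g * b) = g * homogeneousComponent (j - e) b := by
  rw [← decomposition.decompose'_apply, ← decomposition.decompose'_apply]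
  exact DirectSum.coe_decompose_mul_of_left_mem_of_le (homogeneousSubmodule σ R) hg h

lemma homogeneousComponent_mul_of_lt (hg : g.IsHomogeneous e) (b : MvPolynomial σ R)
    (h : j < e) : homogeneousComponent j (g * b) = 0 := by
  rw [← decomposition.decompose'_apply]
  exact DirectSum.coe_decompose_mul_of_left_mem_of_not_le (homogeneousSubmodule σ R) hg
    (not_le.2 h)

end CommSemiring

section CommRing

variable {σ R : Type*} [CommRing R] {g : MvPolynomial σ R} {e j : ℕ}
variable {I : Ideal (MvPolynomial σ R)} {x : MvPolynomial σ R}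

lemma exists_sub_homogeneousComponent_mul_mem (hI : I.IsHomogeneous (homogeneousSubmodule σ R))
    (hx : x ∈ I ⊔ Ideal.span {g}) (hxj : x.IsHomogeneous j) :
    ∃ c, x - homogeneousComponent j (g * c) ∈ I := by
  obtain ⟨a, ha, _, hb, rfl⟩ := Submodule.mem_sup.mp hx
  obtain ⟨c, rfl⟩ := Ideal.mem_span_singleton.mp hb
  refine ⟨c, ?_⟩
  rw [← homogeneousComponent_eq_self hxj, map_add, add_sub_cancel_right]
  exact homogeneousComponent_mem_of_mem hI ha j

lemma mem_of_mem_sup_span_singleton_of_lt (hI : I.IsHomogeneous (homogeneousSubmodule σ R))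
    (hg : g.IsHomogeneous e) (hx : x ∈ I ⊔ Ideal.span {g}) (hxj : x.IsHomogeneous j)
    (hj : j < e) : x ∈ I := by
  obtain ⟨c, hc⟩ := exists_sub_homogeneousComponent_mul_mem hI hx hxj
  rwa [homogeneousComponent_mul_of_lt hg c hj, sub_zero] at hc

lemma exists_sub_mul_mem_of_mem_sup_span_singleton
    (hI : I.IsHomogeneous (homogeneousSubmodule σ R)) (hg : g.IsHomogeneous e)
    (hx : x ∈ I ⊔ Ideal.span {g}) (hxj : x.IsHomogeneous j) (hj : e ≤ j) :
    ∃ c : MvPolynomial σ R, c.IsHomogeneous (j - e) ∧ x - g * c ∈ I := by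
  obtain ⟨c, hc⟩ := exists_sub_homogeneousComponent_mul_mem hI hx hxj
  rw [homogeneousComponent_mul_of_le hg c hj] at hc
  exact ⟨_, homogeneousComponent_isHomogeneous _ c, hc⟩

end CommRing

section Field

variable {σ K : Type*} [Field K]

instance [Finite σ] (j : ℕ) : Module.Finite K (homogeneousSubmodule σ K j) :=
  Module.Finite.iff_fg.mpr (homogeneousSubmodule_fg σ K j)

lemma finrank_homogeneousSubmodule [Finite σ] (j : ℕ) :
    Module.finrank K (homogeneousSubmodule σ K j) = Nat.card {m : σ →₀ ℕ // m.degree = j} := by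
  have := (Finsupp.finite_of_degree_eq (σ := σ) j).fintype
  rw [(LinearEquiv.ofEq _ _ (homogeneousSubmodule_eq_finsupp_supported σ K j) ≪≫ₗ
    AddMonoidAlgebra.supportedEquivFinsupp _).finrank_eq, Module.finrank_finsupp_self,
    Fintype.card_eq_nat_card]
  rfl

end Field

end MvPolynomial

namespace RingTheory.Sequence

variable {R : Type*} [CommRing R] {N : ℕ} {G : Fin N → R}

lemma ofList_take_ofFn (i : Fin N) :
    Ideal.ofList ((List.ofFn G).take i) = Ideal.span (G '' Set.Iio i) := by
  rw [← Fin.ofFn_take_eq_take_ofFn i.isLt.le, Ideal.ofList]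
  congr 1
  ext r
  simp only [Set.mem_ofPred_eq, List.mem_ofFn', Set.mem_range, Fin.take, Set.mem_image, Set.mem_Iio]
  constructor
  · rintro ⟨t, rfl⟩
    exact ⟨_, t.isLt, rfl⟩
  · rintro ⟨t, ht, rfl⟩
    exact ⟨⟨t, ht⟩, rfl⟩

lemma IsWeaklyRegular.mem_of_mul_mem_span_image_Iio (h : IsWeaklyRegular R (List.ofFn G))
    (i : Fin N) {x : R} (hx : G i * x ∈ Ideal.span (G '' Set.Iio i)) :
    x ∈ Ideal.span (G '' Set.Iio i) := by
  have := h.regular_mod_prev i (by simp)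
  rw [ofList_take_ofFn, List.getElem_ofFn, Ideal.smul_eq_mul, Ideal.mul_top] at this
  refine (Submodule.Quotient.mk_eq_zero _).mp (this ?_)
  simpa only [smul_zero, ← Submodule.Quotient.mk_smul, Submodule.Quotient.mk_eq_zero,
    smul_eq_mul, Fin.eta] using hx

lemma IsRegular.ne_zero (h : IsRegular R (List.ofFn G)) (i : Fin N) : G i ≠ 0 := by
  intro h0
  have hone : (1 : R) ∈ Ideal.span (G '' Set.Iio i) :=
    h.mem_of_mul_mem_span_image_Iio i (by simp [h0])
  refine h.top_ne_smul ?_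
  rw [Ideal.smul_eq_mul, Ideal.mul_top, eq_comm, Ideal.eq_top_iff_one]
  refine Ideal.span_mono ?_ hone
  rintro _ ⟨t, -, rfl⟩
  exact List.mem_ofFn' G _ |>.mpr ⟨t, rfl⟩

end RingTheory.Sequence

section HilbertFunction

variable {K : Type*} [Field K] {N : ℕ} {I : Ideal (MvPolynomial (Fin N) K)}
  {g : MvPolynomial (Fin N) K} {e j : ℕ}

lemma hfI_sup_span_singleton_of_lt (hI : I.IsHomogeneous (homogeneousSubmodule (Fin N) K))
    (hg : g.IsHomogeneous e) (hj : j < e) : hfI (I ⊔ Ideal.span {g}) j = hfI I j := by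
  have : (I ⊔ Ideal.span {g}).restrictScalars K ⊓ homogeneousSubmodule (Fin N) K j =
      I.restrictScalars K ⊓ homogeneousSubmodule (Fin N) K j :=
    le_antisymm (fun x hx => ⟨mem_of_mem_sup_span_singleton_of_lt hI hg hx.1 hx.2 hj, hx.2⟩)
      (inf_le_inf_right _ fun _ => Ideal.mem_sup_left)
  rw [hfI, hfI, this]

lemma hfI_sup_span_singleton_add (hI : I.IsHomogeneous (homogeneousSubmodule (Fin N) K))
    (hg : g.IsHomogeneous e) (hg0 : g ≠ 0) (hreg : ∀ x, g * x ∈ I → x ∈ I) (hj : e ≤ j) :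
    hfI (I ⊔ Ideal.span {g}) j + hfI I (j - e) =
      hfI I j + Module.finrank K (homogeneousSubmodule (Fin N) K (j - e)) := by
  set V := homogeneousSubmodule (Fin N) K
  set μ := LinearMap.mulLeft K g
  have hμ : Function.Injective μ := mul_right_injective₀ hg0
  have hμV : (V (j - e)).map μ ≤ V j := by
    rintro _ ⟨b, hb, rfl⟩
    exact (Nat.add_sub_cancel' hj ▸ hg.mul hb : (g * b).IsHomogeneous j)
  have hsup : (I ⊔ Ideal.span {g}).restrictScalars K ⊓ V j =
      (I.restrictScalars K ⊓ V j) ⊔ (V (j - e)).map μ := by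
    refine le_antisymm (fun x hx => ?_) (sup_le (inf_le_inf_right _ fun x hx => ?_) ?_)
    · obtain ⟨c, hc, hxc⟩ := exists_sub_mul_mem_of_mem_sup_span_singleton hI hg hx.1 hx.2 hj
      refine Submodule.mem_sup.mpr ⟨_, ⟨hxc, ?_⟩, g * c, ⟨c, hc, rfl⟩, sub_add_cancel x _⟩
      exact Submodule.sub_mem _ hx.2 (hμV ⟨c, hc, rfl⟩)
    · exact Ideal.mem_sup_left hx
    · rintro _ ⟨b, hb, rfl⟩
      exact ⟨Ideal.mem_sup_right (Ideal.mem_span_singleton.mpr ⟨b, rfl⟩), hμV ⟨b, hb, rfl⟩⟩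
  have hinf : (I.restrictScalars K ⊓ V j) ⊓ (V (j - e)).map μ =
      (I.restrictScalars K ⊓ V (j - e)).map μ := by
    refine le_antisymm ?_ ?_
    · rintro _ ⟨⟨hx, -⟩, b, hb, rfl⟩
      exact ⟨b, ⟨hreg b hx, hb⟩, rfl⟩
    · rintro _ ⟨b, ⟨hbI, hb⟩, rfl⟩
      exact ⟨⟨I.mul_mem_left g hbI, hμV ⟨b, hb, rfl⟩⟩, b, hb, rfl⟩
  have := Submodule.finrank_sup_add_finrank_inf_eq (I.restrictScalars K ⊓ V j) ((V (j - e)).map μ)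
  rw [← hsup, hinf, (Submodule.equivMapOfInjective μ hμ _).finrank_eq.symm,
    (Submodule.equivMapOfInjective μ hμ _).finrank_eq.symm] at this
  unfold hfI
  omega

lemma hfI_span_image_add_boundedMonomialCount (G : Fin N → MvPolynomial (Fin N) K)
    (E : Fin N → ℕ) (hG : ∀ i, (G i).IsHomogeneous (E i)) (hG0 : ∀ i, G i ≠ 0)
    (hreg : ∀ i x, G i * x ∈ Ideal.span (G '' Set.Iio i) → x ∈ Ideal.span (G '' Set.Iio i))
    (i : Fin (N + 1)) (j : ℕ) :
    hfI (Ideal.span (G '' {t | t.castSucc < i})) j +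
        Finsupp.boundedMonomialCount E {t | t.castSucc < i} j =
      Module.finrank K (homogeneousSubmodule (Fin N) K j) := by
  induction i using Fin.induction generalizing j with
  | zero =>
    simp [hfI, Finsupp.boundedMonomialCount_empty, finrank_homogeneousSubmodule]
  | succ i ih =>
    have hIio : {t : Fin N | t.castSucc < i.castSucc} = Set.Iio i := by
      ext; simp [Fin.castSucc_lt_castSucc_iff]
    have hinsert : {t : Fin N | t.castSucc < i.succ} = insert i (Set.Iio i) := by
      ext; simp [Fin.castSucc_lt_succ_iff, le_iff_eq_or_lt]
    simp only [hIio] at ih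
    have hI : (Ideal.span (G '' Set.Iio i)).IsHomogeneous (homogeneousSubmodule (Fin N) K) :=
      Ideal.homogeneous_span _ _ fun _ ⟨t, _, ht⟩ => ⟨E t, ht ▸ hG t⟩
    rw [hinsert, Set.image_insert_eq, Ideal.span_insert, sup_comm]
    rcases lt_or_ge j (E i) with hj | hj
    · rw [hfI_sup_span_singleton_of_lt hI (hG i) hj,
        Finsupp.boundedMonomialCount_insert_of_lt E hj]
      exact ih j
    · have := hfI_sup_span_singleton_add hI (hG i) (hG0 i) (hreg i) hj
      have := Finsupp.boundedMonomialCount_insert_add E (s := Set.Iio i) (lt_irrefl i) hj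
      have := ih j
      have := ih (j - E i)
      omega

theorem mem_span_range_of_isHomogeneous_of_sum_lt (G : Fin N → MvPolynomial (Fin N) K)
    (E : Fin N → ℕ) (hG : ∀ i, (G i).IsHomogeneous (E i)) (hG0 : ∀ i, G i ≠ 0)
    (hreg : ∀ i x, G i * x ∈ Ideal.span (G '' Set.Iio i) → x ∈ Ideal.span (G '' Set.Iio i))
    {p : MvPolynomial (Fin N) K} {D : ℕ} (hp : p.IsHomogeneous D)
    (hD : ∑ t, (E t - 1) < D) : p ∈ Ideal.span (Set.range G) := by
  have hall := hfI_span_image_add_boundedMonomialCount G E hG hG0 hreg (Fin.last N) D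
  have huniv : {t : Fin N | t.castSucc < Fin.last N} = Set.univ := by
    ext; simp [Fin.castSucc_lt_last]
  rw [huniv, Set.image_univ, Finsupp.boundedMonomialCount_univ_eq_zero E hD, add_zero,
    hfI] at hall
  have hp' : p ∈ homogeneousSubmodule (Fin N) K D := hp
  rw [← Submodule.eq_of_le_of_finrank_eq inf_le_right hall] at hp'
  exact hp'.1

end HilbertFunction

theorem last_form_factors_modulo_general
    {k : Type*} [Field k] {n : ℕ}
    (f : Fin n → MvPolynomial (Fin (n + 1)) k) (d : Fin n → ℕ)
    (hhom : ∀ i, MvPolynomial.IsHomogeneous (f i) (d i))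
    (ℓ : MvPolynomial (Fin (n + 1)) k) (hℓ : MvPolynomial.IsHomogeneous ℓ 1)
    (hregℓ : RingTheory.Sequence.IsRegular (MvPolynomial (Fin (n + 1)) k)
      (List.ofFn f ++ [ℓ]))
    (fn : MvPolynomial (Fin (n + 1)) k) (D : ℕ)
    (hfn : MvPolynomial.IsHomogeneous fn D)
    (hD : (∑ j, (d j - 1)) < D)
    (hregfn : RingTheory.Sequence.IsRegular (MvPolynomial (Fin (n + 1)) k)
      (List.ofFn f ++ [fn])) :
    fn ∈ Ideal.span (Set.range f) ⊔ Ideal.span {ℓ} ∧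
    ∃ (g f' : MvPolynomial (Fin (n + 1)) k),
      MvPolynomial.IsHomogeneous g (D - 1) ∧
      MvPolynomial.IsHomogeneous f' D ∧
      f' - ℓ * g ∈ Ideal.span (Set.range f) ∧
      RingTheory.Sequence.IsRegular (MvPolynomial (Fin (n + 1)) k)
        (List.ofFn f ++ [f']) ∧
      Ideal.span (Set.range f) ⊔ Ideal.span {f'} =
        Ideal.span (Set.range f) ⊔ Ideal.span {fn} := by
  set G : Fin (n + 1) → MvPolynomial (Fin (n + 1)) k := Fin.snoc f ℓ
  set E : Fin (n + 1) → ℕ := Fin.snoc d 1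
  have hG : ∀ i, (G i).IsHomogeneous (E i) :=
    Fin.lastCases (by simpa [G, E] using hℓ) fun i => by simpa [G, E] using hhom i
  have hregG : RingTheory.Sequence.IsRegular (MvPolynomial (Fin (n + 1)) k) (List.ofFn G) := by
    simpa only [G, List.ofFn_succ', Fin.snoc_castSucc, Fin.snoc_last, List.concat_eq_append]
      using hregℓ
  have hsum : ∑ t, (E t - 1) = ∑ j, (d j - 1) := by
    simp [E, Fin.sum_univ_castSucc]
  have hmem : fn ∈ Ideal.span (Set.range f) ⊔ Ideal.span {ℓ} := by
    have := mem_span_range_of_isHomogeneous_of_sum_lt G E hG hregG.ne_zero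
      (fun i _ => hregG.mem_of_mul_mem_span_image_Iio i) hfn (hsum ▸ hD)
    rwa [Fin.range_snoc, Set.insert_eq, Ideal.span_union, sup_comm] at this
  have hf : (Ideal.span (Set.range f)).IsHomogeneous (homogeneousSubmodule (Fin (n + 1)) k) :=
    Ideal.homogeneous_span _ _ fun _ ⟨i, hi⟩ => ⟨d i, hi ▸ hhom i⟩
  obtain ⟨g, hg, hfg⟩ := exists_sub_mul_mem_of_mem_sup_span_singleton hf hℓ hmem hfn (by omega)
  exact ⟨hmem, g, fn, hg, hfn, hfg, hregfn, rfl⟩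

/-- Let `S = k[x₁,…,x_{n+1}]` over an infinite field, let
`f₁,…,fₙ` be a homogeneous regular sequence of degrees `d₁ ≤ ⋯ ≤ dₙ`, let `ℓ`
be a (general) linear form so that `f₁,…,fₙ,ℓ` is a regular sequence, and let
`f_{n+1}` be a form of degree `D > Σⱼ(dⱼ-1)` such that `f₁,…,fₙ,f_{n+1}` is a
regular sequence. Then `f_{n+1} ∈ (f₁,…,fₙ,ℓ)`; consequently there are a form
`g` of degree `D-1` and a form `f'` of degree `D` with `f' ≡ ℓ·g` modulo
`(f₁,…,fₙ)` such that `f₁,…,fₙ,f'` is a regular sequence and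
`(f₁,…,fₙ,f') = (f₁,…,fₙ,f_{n+1})`. -/
theorem last_form_factors_modulo
    {k : Type*} [Field k] [Infinite k] {n : ℕ}
    (f : Fin n → MvPolynomial (Fin (n + 1)) k) (d : Fin n → ℕ)
    (hhom : ∀ i, MvPolynomial.IsHomogeneous (f i) (d i)) (hmono : Monotone d)
    (ℓ : MvPolynomial (Fin (n + 1)) k) (hℓ : MvPolynomial.IsHomogeneous ℓ 1)
    (hregℓ : RingTheory.Sequence.IsRegular (MvPolynomial (Fin (n + 1)) k)
      (List.ofFn f ++ [ℓ]))
    (fn : MvPolynomial (Fin (n + 1)) k) (D : ℕ)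
    (hfn : MvPolynomial.IsHomogeneous fn D)
    (hD : (∑ j, (d j - 1)) < D)
    (hregfn : RingTheory.Sequence.IsRegular (MvPolynomial (Fin (n + 1)) k)
      (List.ofFn f ++ [fn])) :
    fn ∈ Ideal.span (Set.range f) ⊔ Ideal.span {ℓ} ∧
    ∃ (g f' : MvPolynomial (Fin (n + 1)) k),
      MvPolynomial.IsHomogeneous g (D - 1) ∧
      MvPolynomial.IsHomogeneous f' D ∧
      f' - ℓ * g ∈ Ideal.span (Set.range f) ∧
      RingTheory.Sequence.IsRegular (MvPolynomial (Fin (n + 1)) k)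
        (List.ofFn f ++ [f']) ∧
      Ideal.span (Set.range f) ⊔ Ideal.span {f'} =
        Ideal.span (Set.range f) ⊔ Ideal.span {fn} :=
  last_form_factors_modulo_general f d hhom ℓ hℓ hregℓ fn D hfn hD hregfn
end

section
/- Let char(k) = p > 0, S = k[x₁,x₂,x₃], and I = (x₁^{2p}, x₁^p x₂^p, x₂^{2p}, x₁^p x₃^p, x₂^p x₃^p). Let d = (2p, 2p, ∞), so the d-LPP ideal of I satisfies L^d(I) ⊇ (x₁^{2p}, x₁^{2p-1}x₂, x₁^{2p-1}x₃, x₁^{2p-2}x₂², x₂^{2p}) in degree 2p. Then for every linear form ℓ with non-zero coefficient of x₃, the image of [I]_{2p} in S/(ℓ) is 3-dimensional while the image of [L^d(I)]_{2p} in S/(x₃) is 4-dimensional; hence HF(I + (ℓ); 2p) < HF(L^d(I) + (x₃); 2p). -/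
open MvPolynomial

namespace CEx
variable {k : Type*} [Field k]

lemma expDeg3 (m : Fin 3 →₀ ℕ) : expDeg m = m 0 + m 1 + m 2 := by
  rw [expDeg, Finsupp.sum_fintype _ _ (fun _ => rfl), Fin.sum_univ_three]

lemma ext3 {m n : Fin 3 →₀ ℕ} (h0 : m 0 = n 0) (h1 : m 1 = n 1) (h2 : m 2 = n 2) : m = n := by
  ext i
  fin_cases i <;> assumption

lemma lexGT_fst {u v : Fin 3 →₀ ℕ} (h : v 0 < u 0) : LexGT u v :=
  ⟨0, h, fun l hl => absurd hl (by simp [Fin.lt_def])⟩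

lemma lexGT_snd {u v : Fin 3 →₀ ℕ} (h0 : u 0 = v 0) (h : v 1 < u 1) : LexGT u v := by
  refine ⟨1, h, fun l hl => ?_⟩
  have : l = 0 := by
    have := hl
    fin_cases l <;> simp_all [Fin.lt_def]
  rw [this, h0]

lemma le_expDeg_eq {a m : Fin 3 →₀ ℕ} (h : a ≤ m) (he : expDeg a = expDeg m) : a = m := by
  rw [Finsupp.le_def] at h
  have h0 := h 0; have h1 := h 1; have h2 := h 2
  rw [expDeg3, expDeg3] at he
  exact ext3 (by omega) (by omega) (by omega)

lemma expDeg_eq_degree {n : ℕ} (m : Fin n →₀ ℕ) : expDeg m = m.degree := rfl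

lemma degree_add {σ : Type*} (u v : σ →₀ ℕ) : (u + v).degree = u.degree + v.degree := by
  rw [show (Finsupp.degree : (σ →₀ ℕ) → ℕ) = Finsupp.weight (fun _ => 1) from by rw [Finsupp.degree_eq_weight_one]]
  exact map_add _ _ _

lemma monomial_mem_span_iff {n : ℕ} {A : Set (Fin n →₀ ℕ)} {m : Fin n →₀ ℕ} :
    monomial m (1 : k) ∈ Ideal.span ((fun m => monomial m (1 : k)) '' A) ↔ ∃ a ∈ A, a ≤ m := by
  rw [mem_ideal_span_monomial_image]
  simp [support_monomial]

/-- degree-j part of a monomial ideal -/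
lemma inf_homog_eq_span {n : ℕ} (A : Set (Fin n →₀ ℕ)) (j : ℕ) :
    (Ideal.span ((fun m => monomial m (1 : k)) '' A)).restrictScalars k
        ⊓ homogeneousSubmodule (Fin n) k j
      = Submodule.span k ((fun m => monomial m (1 : k)) ''
          {m | expDeg m = j ∧ ∃ a ∈ A, a ≤ m}) := by
  apply le_antisymm
  · intro f hf
    obtain ⟨hfJ, hfh⟩ := Submodule.mem_inf.mp hf
    rw [Submodule.restrictScalars_mem] at hfJ
    rw [mem_homogeneousSubmodule] at hfh
    have hsupp := mem_ideal_span_monomial_image.mp hfJ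
    rw [show f = ∑ m ∈ f.support, monomial m (coeff m f) from (as_sum f)]
    apply Submodule.sum_mem
    intro m hm
    have h1 : expDeg m = j := by
      rw [expDeg_eq_degree]
      by_contra hne
      exact (mem_support_iff.mp hm) (hfh.coeff_eq_zero hne)
    have : monomial m (coeff m f) = (coeff m f) • monomial m (1:k) := by
      rw [smul_monomial, smul_eq_mul, mul_one]
    rw [this]
    exact Submodule.smul_mem _ _ (Submodule.subset_span ⟨m, ⟨h1, hsupp m hm⟩, rfl⟩)
  · rw [Submodule.span_le]
    rintro f ⟨m, ⟨hdeg, ha⟩, rfl⟩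
    rw [SetLike.mem_coe, Submodule.mem_inf]
    constructor
    · rw [Submodule.restrictScalars_mem]
      exact monomial_mem_span_iff.mpr ha
    · rw [mem_homogeneousSubmodule]
      exact isHomogeneous_monomial _ (by rw [← expDeg_eq_degree]; exact hdeg)

lemma linearIndependent_monomials {n : ℕ} (T : Set (Fin n →₀ ℕ)) :
    LinearIndependent k ((↑) : ((fun m => monomial m (1:k)) '' T) → MvPolynomial (Fin n) k) := by
  have := (basisMonomials (Fin n) k).linearIndependent.linearIndepOn_id
  rw [coe_basisMonomials] at this
  exact this.mono (Set.image_subset_range _ _)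

lemma finrank_span_monomials {n : ℕ} (T : Set (Fin n →₀ ℕ)) (hT : T.Finite) :
    Module.finrank k (Submodule.span k ((fun m => monomial m (1:k)) '' T)) = T.ncard := by
  have hTi : ((fun m => monomial m (1:k)) '' T).Finite := hT.image _
  haveI := hTi.fintype
  rw [finrank_span_set_eq_card (linearIndependent_monomials T)]
  rw [← Set.ncard_eq_toFinset_card']
  exact Set.ncard_image_of_injective T (monomial_left_injective one_ne_zero)

lemma hc_mem_monomial_span {n : ℕ} (A : Set (Fin n →₀ ℕ)) {f : MvPolynomial (Fin n) k}
    (hf : f ∈ Ideal.span ((fun m => monomial m (1 : k)) '' A)) (j : ℕ) :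
    homogeneousComponent j f ∈ Ideal.span ((fun m => monomial m (1 : k)) '' A) := by
  rw [mem_ideal_span_monomial_image] at hf ⊢
  intro m hm
  apply hf
  rw [mem_support_iff] at hm ⊢
  rw [coeff_homogeneousComponent] at hm
  intro h
  apply hm
  rw [h, ite_self]

lemma homogeneousComponent_mul_homog {n : ℕ} (h ℓ : MvPolynomial (Fin n) k)
    (hl : ℓ.IsHomogeneous 1) (j : ℕ) :
    homogeneousComponent (j + 1) (h * ℓ) = homogeneousComponent j h * ℓ := by
  classical
  ext d
  rw [coeff_homogeneousComponent, coeff_mul, coeff_mul]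
  by_cases hd : d.degree = j + 1
  · rw [if_pos hd]
    apply Finset.sum_congr rfl
    rintro ⟨u, v⟩ huv
    rw [Finset.HasAntidiagonal.mem_antidiagonal] at huv
    rw [coeff_homogeneousComponent]
    by_cases hv : coeff v ℓ = 0
    · simp [hv]
    · have hv1 : v.degree = 1 := by
        by_contra hne
        exact hv (hl.coeff_eq_zero hne)
      have hu : u.degree = j := by
        have h2 : (u + v).degree = u.degree + v.degree := degree_add u v
        rw [huv, hd, hv1] at h2
        omega
      rw [if_pos hu]
  · rw [if_neg hd]
    symm
    apply Finset.sum_eq_zero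
    rintro ⟨u, v⟩ huv
    rw [Finset.HasAntidiagonal.mem_antidiagonal] at huv
    rw [coeff_homogeneousComponent]
    by_cases hu : u.degree = j
    · by_cases hv : coeff v ℓ = 0
      · simp [hv]
      · exfalso
        have hv1 : v.degree = 1 := by
          by_contra hne
          exact hv (hl.coeff_eq_zero hne)
        have h2 : (u + v).degree = u.degree + v.degree := degree_add u v
        rw [huv, hu, hv1] at h2
        omega
    · rw [if_neg hu, zero_mul]


/-- The degree-j homogeneous submodule is spanned by monomials. -/
lemma homog_eq_span (n j : ℕ) :
    homogeneousSubmodule (Fin n) k j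
      = Submodule.span k ((fun m => monomial m (1:k)) '' {m | expDeg m = j}) := by
  apply le_antisymm
  · intro f hf
    rw [mem_homogeneousSubmodule] at hf
    rw [show f = ∑ m ∈ f.support, monomial m (coeff m f) from (as_sum f)]
    apply Submodule.sum_mem
    intro m hm
    have h1 : expDeg m = j := by
      rw [expDeg_eq_degree]
      by_contra hne
      exact (mem_support_iff.mp hm) (hf.coeff_eq_zero hne)
    have : monomial m (coeff m f) = (coeff m f) • monomial m (1:k) := by
      rw [smul_monomial, smul_eq_mul, mul_one]
    rw [this]
    exact Submodule.smul_mem _ _ (Submodule.subset_span ⟨m, h1, rfl⟩)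
  · rw [Submodule.span_le]
    rintro f ⟨m, hdeg, rfl⟩
    rw [SetLike.mem_coe, mem_homogeneousSubmodule]
    exact isHomogeneous_monomial _ (by rw [← expDeg_eq_degree]; exact hdeg)

lemma finite_deg (n j : ℕ) : {m : Fin n →₀ ℕ | expDeg m = j}.Finite := by
  apply (Finsupp.finite_of_degree_le j).subset
  intro m hm
  simp only [Set.mem_setOf_eq] at hm ⊢
  rw [← expDeg_eq_degree, hm]

instance homog_fd (n j : ℕ) : FiniteDimensional k (homogeneousSubmodule (Fin n) k j) := by
  rw [homog_eq_span]
  exact FiniteDimensional.span_of_finite _ ((finite_deg n j).image _)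

lemma W_eq (ℓ : MvPolynomial (Fin 3) k) (hl : ℓ.IsHomogeneous 1) (j : ℕ) :
    (Ideal.span {ℓ}).restrictScalars k ⊓ homogeneousSubmodule (Fin 3) k (j+1)
      = Submodule.map (LinearMap.mulLeft k ℓ) (homogeneousSubmodule (Fin 3) k j) := by
  apply le_antisymm
  · intro f hf
    obtain ⟨hf1, hf2⟩ := Submodule.mem_inf.mp hf
    rw [Submodule.restrictScalars_mem, Ideal.mem_span_singleton'] at hf1
    obtain ⟨a, rfl⟩ := hf1
    rw [mem_homogeneousSubmodule] at hf2
    refine ⟨homogeneousComponent j a, homogeneousComponent_mem j a, ?_⟩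
    have h1 : homogeneousComponent (j+1) (a * ℓ) = a * ℓ := by
      rw [homogeneousComponent_of_mem ((mem_homogeneousSubmodule _ _).mpr hf2), if_pos rfl]
    rw [LinearMap.mulLeft_apply, mul_comm, ← homogeneousComponent_mul_homog a ℓ hl j, h1]
  · rintro f ⟨g, hg, rfl⟩
    rw [Submodule.mem_inf]
    constructor
    · rw [Submodule.restrictScalars_mem, Ideal.mem_span_singleton']
      exact ⟨g, mul_comm g ℓ⟩
    · rw [mem_homogeneousSubmodule, LinearMap.mulLeft_apply]
      rw [Nat.add_comm j 1]
      exact hl.mul ((mem_homogeneousSubmodule j g).mp hg)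

lemma finrank_W (ℓ : MvPolynomial (Fin 3) k) (hl : ℓ.IsHomogeneous 1) (hl0 : ℓ ≠ 0) (j : ℕ) :
    Module.finrank k ↥((Ideal.span {ℓ}).restrictScalars k ⊓ homogeneousSubmodule (Fin 3) k (j+1))
      = Module.finrank k ↥(homogeneousSubmodule (Fin 3) k j) := by
  rw [W_eq ℓ hl j]
  have hinj : Function.Injective (LinearMap.mulLeft k ℓ) := by
    intro x y h
    rw [LinearMap.mulLeft_apply, LinearMap.mulLeft_apply] at h
    exact mul_left_cancel₀ hl0 h
  exact (LinearEquiv.finrank_eq (Submodule.equivMapOfInjective _ hinj _)).symm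

lemma hf_sup (J : Ideal (MvPolynomial (Fin 3) k)) (A : Set (Fin 3 →₀ ℕ))
    (hJ : J = Ideal.span ((fun m => monomial m (1 : k)) '' A))
    (ℓ : MvPolynomial (Fin 3) k) (hl : ℓ.IsHomogeneous 1) (j : ℕ) :
    Module.finrank k
        ↥((J ⊔ Ideal.span {ℓ}).restrictScalars k ⊓ homogeneousSubmodule (Fin 3) k (j+1))
      = Module.finrank k
          ↥(Submodule.map (((Ideal.span {ℓ}).mkQ).restrictScalars k)
            (J.restrictScalars k ⊓ homogeneousSubmodule (Fin 3) k (j+1)))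
        + Module.finrank k
            ↥((Ideal.span {ℓ}).restrictScalars k ⊓ homogeneousSubmodule (Fin 3) k (j+1)) := by
  set S := homogeneousSubmodule (Fin 3) k (j+1) with hS
  set V := J.restrictScalars k ⊓ S with hV
  set W := (Ideal.span {ℓ}).restrictScalars k ⊓ S with hW
  set U := (J ⊔ Ideal.span {ℓ}).restrictScalars k ⊓ S with hU
  have hUVW : U = V ⊔ W := by
    apply le_antisymm
    · intro f hf
      obtain ⟨hf1, hf2⟩ := Submodule.mem_inf.mp hf
      rw [Submodule.restrictScalars_mem] at hf1
      obtain ⟨g, hg, w, hw, rfl⟩ := Submodule.mem_sup.mp hf1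
      have hfc : homogeneousComponent (j+1) (g + w) = g + w := by
        rw [homogeneousComponent_of_mem hf2, if_pos rfl]
      rw [← hfc, map_add]
      apply Submodule.add_mem_sup
      · rw [hV, Submodule.mem_inf]
        refine ⟨?_, homogeneousComponent_mem _ _⟩
        rw [Submodule.restrictScalars_mem, hJ]
        exact hc_mem_monomial_span A (hJ ▸ hg) _
      · obtain ⟨a, rfl⟩ := Ideal.mem_span_singleton'.mp hw
        rw [homogeneousComponent_mul_homog a ℓ hl j, hW, Submodule.mem_inf]
        constructor
        · rw [Submodule.restrictScalars_mem, Ideal.mem_span_singleton']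
          exact ⟨_, rfl⟩
        · exact (homogeneousComponent_isHomogeneous j a).mul hl
    · apply sup_le
      · exact inf_le_inf (fun x hx => (le_sup_left : J ≤ J ⊔ Ideal.span {ℓ}) hx) le_rfl
      · exact inf_le_inf (fun x hx => (le_sup_right : Ideal.span {ℓ} ≤ J ⊔ _) hx) le_rfl
  haveI : FiniteDimensional k U :=
    Submodule.finiteDimensional_of_le (S₂ := homogeneousSubmodule (Fin 3) k (j+1))
      (hU ▸ inf_le_right)
  set Q := ((Ideal.span {ℓ}).mkQ).restrictScalars k with hQ
  set F := Q.comp U.subtype with hF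
  have hrank := LinearMap.finrank_range_add_finrank_ker F
  have hker : LinearMap.ker Q = (Ideal.span {ℓ}).restrictScalars k := by
    rw [hQ, LinearMap.ker_restrictScalars, Submodule.ker_mkQ]
  have hrange : LinearMap.range F = Submodule.map Q V := by
    rw [hF, LinearMap.range_comp, Submodule.range_subtype, hUVW, Submodule.map_sup]
    have : Submodule.map Q W = ⊥ := by
      rw [eq_bot_iff]
      rintro x ⟨y, hy, rfl⟩
      have h3 : y ∈ LinearMap.ker Q := by
        rw [hker]
        exact (Submodule.mem_inf.mp hy).1
      rw [Submodule.mem_bot]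
      exact LinearMap.mem_ker.mp h3
    rw [this, sup_bot_eq]
  have hkerF : LinearMap.ker F = Submodule.comap U.subtype W := by
    rw [hF, LinearMap.ker_comp, hker]
    ext x
    simp only [Submodule.mem_comap, hW, Submodule.mem_inf]
    exact ⟨fun h => ⟨h, (inf_le_right : U ≤ S) x.2⟩, fun h => h.1⟩
  have hWU : W ≤ U := by rw [hUVW]; exact le_sup_right
  have hkerW : Module.finrank k (LinearMap.ker F) = Module.finrank k W := by
    rw [hkerF]
    exact LinearEquiv.finrank_eq (Submodule.comapSubtypeEquivOfLe hWU)
  rw [hrange, hkerW] at hrank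
  exact hrank.symm

lemma expDeg_single (i : Fin 3) (e : ℕ) : expDeg (Finsupp.single i e) = e := by
  rw [expDeg3]
  fin_cases i <;> simp [Finsupp.single_apply]

lemma single_ne {i j : Fin 3} (h : i ≠ j) :
    Finsupp.single i 1 ≠ Finsupp.single j (1 : ℕ) := by
  intro hh
  exact h ((Finsupp.single_left_inj one_ne_zero).mp hh)

lemma deg1_eq_single {m : Fin 3 →₀ ℕ} (h : expDeg m = 1) :
    m = Finsupp.single 0 1 ∨ m = Finsupp.single 1 1 ∨ m = Finsupp.single 2 1 := by
  rw [expDeg3] at h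
  rcases Nat.lt_or_ge (m 0) 1 with h0 | h0
  · rcases Nat.lt_or_ge (m 1) 1 with h1 | h1
    · right; right
      exact ext3 (by simp [Finsupp.single_apply]; omega) (by simp [Finsupp.single_apply]; omega)
        (by simp [Finsupp.single_apply]; omega)
    · right; left
      exact ext3 (by simp [Finsupp.single_apply]; omega) (by simp [Finsupp.single_apply]; omega)
        (by simp [Finsupp.single_apply]; omega)
  · left
    exact ext3 (by simp [Finsupp.single_apply]; omega) (by simp [Finsupp.single_apply]; omega)
      (by simp [Finsupp.single_apply]; omega)

lemma linear_form_decomp (ℓ : MvPolynomial (Fin 3) k) (hl : ℓ.IsHomogeneous 1) :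
    ℓ = C (coeff (Finsupp.single 0 1) ℓ) * X 0 + C (coeff (Finsupp.single 1 1) ℓ) * X 1
        + C (coeff (Finsupp.single 2 1) ℓ) * X 2 := by
  ext m
  rw [coeff_add, coeff_add, coeff_C_mul, coeff_C_mul, coeff_C_mul, coeff_X', coeff_X', coeff_X']
  by_cases hm : expDeg m = 1
  · rcases deg1_eq_single hm with rfl | rfl | rfl
    · rw [if_pos rfl, if_neg (single_ne (by decide)), if_neg (single_ne (by decide))]
      ring
    · rw [if_neg (single_ne (by decide)), if_pos rfl, if_neg (single_ne (by decide))]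
      ring
    · rw [if_neg (single_ne (by decide)), if_neg (single_ne (by decide)), if_pos rfl]
      ring
  · have hz : coeff m ℓ = 0 := hl.coeff_eq_zero (by rwa [← expDeg_eq_degree])
    have h0 : ¬(Finsupp.single (0 : Fin 3) 1 = m) := fun h => hm (h ▸ expDeg_single 0 1)
    have h1 : ¬(Finsupp.single (1 : Fin 3) 1 = m) := fun h => hm (h ▸ expDeg_single 1 1)
    have h2 : ¬(Finsupp.single (2 : Fin 3) 1 = m) := fun h => hm (h ▸ expDeg_single 2 1)
    rw [hz, if_neg h0, if_neg h1, if_neg h2]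
    ring

lemma pow_p_linear {p : ℕ} (hp : p.Prime) [CharP k p] (a b c : k) :
    (C a * X 0 + C b * X 1 + C c * X 2 : MvPolynomial (Fin 3) k) ^ p
      = C (a^p) * (X 0)^p + C (b^p) * (X 1)^p + C (c^p) * (X 2)^p := by
  haveI := Fact.mk hp
  rw [add_pow_char, add_pow_char, mul_pow, mul_pow, mul_pow, ← C_pow, ← C_pow, ← C_pow]

lemma subst_kill_ideal {ℓ : MvPolynomial (Fin 3) k} (φ : MvPolynomial (Fin 3) k →ₐ[k] MvPolynomial (Fin 3) k)
    (hφ : φ ℓ = 0) {f : MvPolynomial (Fin 3) k} (hf : f ∈ Ideal.span {ℓ}) : φ f = 0 := by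
  obtain ⟨a, rfl⟩ := Ideal.mem_span_singleton'.mp hf
  rw [map_mul, hφ, mul_zero]

lemma subst_linear_eq_zero (ℓ : MvPolynomial (Fin 3) k) (hl : ℓ.IsHomogeneous 1)
    (hc : coeff (Finsupp.single 2 1) ℓ ≠ 0) :
    (aeval ![X 0, X 1, C (-(coeff (Finsupp.single 2 1) ℓ)⁻¹)
        * (C (coeff (Finsupp.single 0 1) ℓ) * X 0 + C (coeff (Finsupp.single 1 1) ℓ) * X 1)] :
      MvPolynomial (Fin 3) k →ₐ[k] MvPolynomial (Fin 3) k) ℓ = 0 := by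
  set a₀ := coeff (Finsupp.single 0 1) ℓ
  set a₁ := coeff (Finsupp.single 1 1) ℓ
  set c := coeff (Finsupp.single 2 1) ℓ
  conv_lhs => rw [linear_form_decomp ℓ hl]
  simp only [map_add, map_mul, aeval_C, aeval_X]
  simp only [Matrix.cons_val_zero, Matrix.cons_val_one, Matrix.head_cons, Matrix.cons_val_two,
    Matrix.tail_cons]
  have hcc : (C c : MvPolynomial (Fin 3) k) * C (-(c⁻¹)) = -1 := by
    rw [← C_mul, mul_neg, mul_inv_cancel₀ hc, map_neg, map_one]
  have : algebraMap k (MvPolynomial (Fin 3) k) = C := rfl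
  rw [this]
  linear_combination (C a₀ * (X 0 : MvPolynomial (Fin 3) k) + C a₁ * X 1) * hcc

lemma indep_mod (ℓ : MvPolynomial (Fin 3) k)
    (φ : MvPolynomial (Fin 3) k →ₐ[k] MvPolynomial (Fin 3) k) (hφ : φ ℓ = 0)
    {ι : Type} [Fintype ι] (μ : ι → MvPolynomial (Fin 3) k)
    (hfix : ∀ i, φ (μ i) = μ i) (hind : LinearIndependent k μ) :
    LinearIndependent k (fun i => ((Ideal.span {ℓ}).mkQ.restrictScalars k) (μ i)) := by
  rw [Fintype.linearIndependent_iff] at hind ⊢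
  intro g hg
  apply hind
  have h1 : ((Ideal.span {ℓ}).mkQ.restrictScalars k) (∑ i, g i • μ i) = 0 := by
    rw [map_sum]
    simpa using hg
  have h2 : (∑ i, g i • μ i) ∈ Ideal.span {ℓ} := by
    rwa [LinearMap.restrictScalars_apply, Submodule.mkQ_apply, Submodule.Quotient.mk_eq_zero]
      at h1
  have h3 := subst_kill_ideal φ hφ h2
  rw [map_sum] at h3
  simp_rw [map_smul, hfix] at h3
  exact h3

/-! ### triples -/

noncomputable def trip (x y z : ℕ) : Fin 3 →₀ ℕ :=
  Finsupp.single 0 x + Finsupp.single 1 y + Finsupp.single 2 z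

@[simp] lemma trip0 (x y z : ℕ) : trip x y z 0 = x := by
  simp [trip, Finsupp.single_apply]

@[simp] lemma trip1 (x y z : ℕ) : trip x y z 1 = y := by
  simp [trip, Finsupp.single_apply]

@[simp] lemma trip2 (x y z : ℕ) : trip x y z 2 = z := by
  simp [trip, Finsupp.single_apply]

lemma expDeg_trip (x y z : ℕ) : expDeg (trip x y z) = x + y + z := by
  rw [expDeg3]; simp

lemma trip_eq_iff {x y z x' y' z' : ℕ} :
    trip x y z = trip x' y' z' ↔ x = x' ∧ y = y' ∧ z = z' := by
  constructor
  · intro h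
    refine ⟨?_, ?_, ?_⟩
    · have := DFunLike.congr_fun h 0; simpa using this
    · have := DFunLike.congr_fun h 1; simpa using this
    · have := DFunLike.congr_fun h 2; simpa using this
  · rintro ⟨rfl, rfl, rfl⟩; rfl

lemma eq_trip (m : Fin 3 →₀ ℕ) : m = trip (m 0) (m 1) (m 2) :=
  ext3 (by simp) (by simp) (by simp)

lemma single0_eq_trip (e : ℕ) : Finsupp.single (0 : Fin 3) e = trip e 0 0 :=
  ext3 (by simp [Finsupp.single_apply]) (by simp [Finsupp.single_apply])
    (by simp [Finsupp.single_apply])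

lemma single1_eq_trip (e : ℕ) : Finsupp.single (1 : Fin 3) e = trip 0 e 0 :=
  ext3 (by simp [Finsupp.single_apply]) (by simp [Finsupp.single_apply])
    (by simp [Finsupp.single_apply])

lemma monomial_trip (x y z : ℕ) :
    monomial (trip x y z) (1 : k) = X 0 ^ x * X 1 ^ y * X 2 ^ z := by
  rw [X_pow_eq_monomial, X_pow_eq_monomial, X_pow_eq_monomial, monomial_mul, monomial_mul,
    one_mul, one_mul]
  rfl

lemma ncard_six {α : Type*} {a b c d e f : α}
    (h1 : a ∉ ({b,c,d,e,f} : Set α)) (h2 : b ∉ ({c,d,e,f} : Set α))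
    (h3 : c ∉ ({d,e,f} : Set α)) (h4 : d ∉ ({e,f} : Set α)) (h5 : e ∉ ({f} : Set α)) :
    ({a,b,c,d,e,f} : Set α).ncard = 6 := by
  have f5 : ({f} : Set α).Finite := Set.finite_singleton f
  have f4 := f5.insert e
  have f3 := f4.insert d
  have f2 := f3.insert c
  have f1 := f2.insert b
  rw [Set.ncard_insert_of_notMem h1 f1, Set.ncard_insert_of_notMem h2 f2,
    Set.ncard_insert_of_notMem h3 f3, Set.ncard_insert_of_notMem h4 f4,
    Set.ncard_insert_of_notMem h5 f5, Set.ncard_singleton]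

lemma ncard_five_le {α : Type*} (a b c d e : α) : ({a,b,c,d,e} : Set α).ncard ≤ 5 := by
  apply le_trans (Set.ncard_insert_le _ _)
  have h := le_trans (Set.ncard_insert_le b ({c,d,e} : Set α))
    (Nat.add_le_add_right (le_trans (Set.ncard_insert_le c ({d,e} : Set α))
      (Nat.add_le_add_right (le_trans (Set.ncard_insert_le d ({e} : Set α))
        (by rw [Set.ncard_singleton]) ) 1)) 1)
  omega

/-! ### the combinatorial determination of the lex part -/

lemma T0_determined {p : ℕ} (hp : 2 ≤ p) (T₀ : Set (Fin 3 →₀ ℕ))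
    (hdeg : ∀ m ∈ T₀, expDeg m = 2*p)
    (hup : ∀ u v : Fin 3 →₀ ℕ, LexGT u v → v ∈ T₀ → expDeg u = 2*p → u ∈ T₀)
    (hcard : (T₀ ∪ {trip (2*p) 0 0, trip 0 (2*p) 0}).ncard = 5) :
    T₀ ∪ {trip (2*p) 0 0, trip 0 (2*p) 0}
      = {trip (2*p) 0 0, trip (2*p-1) 1 0, trip (2*p-1) 0 1, trip (2*p-2) 2 0, trip 0 (2*p) 0} := by
  have hTfin : (T₀ ∪ {trip (2*p) 0 0, trip 0 (2*p) 0}).Finite := by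
    apply (finite_deg 3 (2*p)).subset
    rintro m (hm | hm)
    · exact hdeg m hm
    · rcases hm with rfl | rfl
      · exact (expDeg_trip _ _ _).trans (by omega)
      · exact (expDeg_trip _ _ _).trans (by omega)
  have hsub : T₀ ⊆ {trip (2*p) 0 0, trip (2*p-1) 1 0, trip (2*p-1) 0 1, trip (2*p-2) 2 0} := by
    intro u hu
    by_contra hu'
    obtain ⟨x, y, z, rfl⟩ : ∃ x y z, u = trip x y z := ⟨u 0, u 1, u 2, eq_trip u⟩
    simp only [Set.mem_insert_iff, Set.mem_singleton_iff, not_or, trip_eq_iff] at hu'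
    obtain ⟨hne_a, hne_1, hne_2, hne_3⟩ := hu'
    have hud : x + y + z = 2*p := by
      have := hdeg _ hu
      rwa [expDeg_trip] at this
    by_cases hub : x = 0 ∧ y = 2*p ∧ z = 0
    · -- case u = x₂^{2p} : four extra elements with first coordinate 1
      obtain ⟨rfl, rfl, rfl⟩ := hub
      have hmem : ∀ y' z' : ℕ, y' + z' = 2*p - 1 → trip 1 y' z' ∈ T₀ := by
        intro y' z' hyz
        apply hup _ _ (lexGT_fst (by simp)) hu
        rw [expDeg_trip]; omega
      have hw1 := hmem (2*p-1) 0 (by omega)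
      have hw2 := hmem (2*p-2) 1 (by omega)
      have hw3 := hmem 1 (2*p-2) (by omega)
      have hw4 := hmem 0 (2*p-1) (by omega)
      have h6 : ({trip (2*p) 0 0, trip 1 (2*p-1) 0, trip 1 (2*p-2) 1, trip 1 1 (2*p-2),
            trip 1 0 (2*p-1), trip 0 (2*p) 0} : Set (Fin 3 →₀ ℕ))
          ⊆ T₀ ∪ {trip (2*p) 0 0, trip 0 (2*p) 0} := by
        rintro m (rfl | rfl | rfl | rfl | rfl | rfl)
        · exact Or.inr (Or.inl rfl)
        · exact Or.inl hw1
        · exact Or.inl hw2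
        · exact Or.inl hw3
        · exact Or.inl hw4
        · exact Or.inr (Or.inr rfl)
      have hc6 : ({trip (2*p) 0 0, trip 1 (2*p-1) 0, trip 1 (2*p-2) 1, trip 1 1 (2*p-2),
            trip 1 0 (2*p-1), trip 0 (2*p) 0} : Set (Fin 3 →₀ ℕ)).ncard = 6 := by
        apply ncard_six <;>
          simp only [Set.mem_insert_iff, Set.mem_singleton_iff, not_or, trip_eq_iff] <;>
          omega
      have := Set.ncard_le_ncard h6 hTfin
      rw [hc6, hcard] at this
      omega
    · -- case u ≠ x₂^{2p}
      have key : x < 2*p-2 ∨ (x = 2*p-2 ∧ y < 2) := by omega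
      have hLa : trip (2*p) 0 0 ∈ T₀ := by
        apply hup _ _ (lexGT_fst (by simp; omega)) hu
        rw [expDeg_trip]; omega
      have hL1 : trip (2*p-1) 1 0 ∈ T₀ := by
        apply hup _ _ (lexGT_fst (by simp; omega)) hu
        rw [expDeg_trip]; omega
      have hL2 : trip (2*p-1) 0 1 ∈ T₀ := by
        apply hup _ _ (lexGT_fst (by simp; omega)) hu
        rw [expDeg_trip]; omega
      have hL3 : trip (2*p-2) 2 0 ∈ T₀ := by
        rcases key with hk | ⟨hk1, hk2⟩
        · apply hup _ _ (lexGT_fst (by simp; omega)) hu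
          rw [expDeg_trip]; omega
        · apply hup _ _ (lexGT_snd (by simp; omega) (by simp; omega)) hu
          rw [expDeg_trip]; omega
      have h6 : ({trip (2*p) 0 0, trip (2*p-1) 1 0, trip (2*p-1) 0 1, trip (2*p-2) 2 0,
            trip x y z, trip 0 (2*p) 0} : Set (Fin 3 →₀ ℕ))
          ⊆ T₀ ∪ {trip (2*p) 0 0, trip 0 (2*p) 0} := by
        rintro m (rfl | rfl | rfl | rfl | rfl | rfl)
        · exact Or.inl hLa
        · exact Or.inl hL1
        · exact Or.inl hL2
        · exact Or.inl hL3
        · exact Or.inl hu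
        · exact Or.inr (Or.inr rfl)
      have hc6 : ({trip (2*p) 0 0, trip (2*p-1) 1 0, trip (2*p-1) 0 1, trip (2*p-2) 2 0,
            trip x y z, trip 0 (2*p) 0} : Set (Fin 3 →₀ ℕ)).ncard = 6 := by
        apply ncard_six <;>
          simp only [Set.mem_insert_iff, Set.mem_singleton_iff, not_or, trip_eq_iff] <;>
          omega
      have := Set.ncard_le_ncard h6 hTfin
      rw [hc6, hcard] at this
      omega
  -- conclude by cardinality
  have hTsub : T₀ ∪ {trip (2*p) 0 0, trip 0 (2*p) 0}
      ⊆ {trip (2*p) 0 0, trip (2*p-1) 1 0, trip (2*p-1) 0 1, trip (2*p-2) 2 0, trip 0 (2*p) 0} := by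
    rintro m (hm | hm)
    · rcases hsub hm with rfl | rfl | rfl | rfl
      · exact Or.inl rfl
      · exact Or.inr (Or.inl rfl)
      · exact Or.inr (Or.inr (Or.inl rfl))
      · exact Or.inr (Or.inr (Or.inr (Or.inl rfl)))
    · rcases hm with rfl | rfl
      · exact Or.inl rfl
      · exact Or.inr (Or.inr (Or.inr (Or.inr rfl)))
  refine Set.eq_of_subset_of_ncard_le hTsub (by rw [hcard]; exact ncard_five_le _ _ _ _ _) ?_
  apply (finite_deg 3 (2*p)).subset
  rintro m (rfl | rfl | rfl | rfl | rfl) <;> rw [Set.mem_setOf_eq, expDeg_trip] <;> omega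

lemma ncard_five {α : Type*} {a b c d e : α}
    (h1 : a ∉ ({b,c,d,e} : Set α)) (h2 : b ∉ ({c,d,e} : Set α))
    (h3 : c ∉ ({d,e} : Set α)) (h4 : d ∉ ({e} : Set α)) :
    ({a,b,c,d,e} : Set α).ncard = 5 := by
  have f5 : ({e} : Set α).Finite := Set.finite_singleton e
  have f4 := f5.insert d
  have f3 := f4.insert c
  have f2 := f3.insert b
  rw [Set.ncard_insert_of_notMem h1 f2, Set.ncard_insert_of_notMem h2 f3,
    Set.ncard_insert_of_notMem h3 f4, Set.ncard_insert_of_notMem h4 f5, Set.ncard_singleton]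

lemma range_fin3 {α : Type*} (f : Fin 3 → α) : Set.range f = {f 0, f 1, f 2} := by
  ext x
  constructor
  · rintro ⟨i, rfl⟩
    fin_cases i
    · exact Or.inl rfl
    · exact Or.inr (Or.inl rfl)
    · exact Or.inr (Or.inr rfl)
  · rintro (rfl | rfl | rfl)
    exacts [⟨0, rfl⟩, ⟨1, rfl⟩, ⟨2, rfl⟩]

lemma range_fin4 {α : Type*} (f : Fin 4 → α) : Set.range f = {f 0, f 1, f 2, f 3} := by
  ext x
  constructor
  · rintro ⟨i, rfl⟩
    fin_cases i
    · exact Or.inl rfl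
    · exact Or.inr (Or.inl rfl)
    · exact Or.inr (Or.inr (Or.inl rfl))
    · exact Or.inr (Or.inr (Or.inr rfl))
  · rintro (rfl | rfl | rfl | rfl)
    exacts [⟨0, rfl⟩, ⟨1, rfl⟩, ⟨2, rfl⟩, ⟨3, rfl⟩]

lemma li_monomials {ι : Type} [Fintype ι] (e : ι → (Fin 3 →₀ ℕ)) (he : Function.Injective e) :
    LinearIndependent k (fun i => monomial (e i) (1 : k)) := by
  have := (basisMonomials (Fin 3) k).linearIndependent.comp e he
  rwa [coe_basisMonomials] at this

set_option maxHeartbeats 1000000 in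
lemma rankI {p : ℕ} (hp : p.Prime) [CharP k p]
    (ℓ : MvPolynomial (Fin 3) k) (hl : ℓ.IsHomogeneous 1)
    (hc : coeff (Finsupp.single 2 1) ℓ ≠ 0) :
    Module.finrank k ↥(Submodule.map (((Ideal.span {ℓ}).mkQ).restrictScalars k)
      (Submodule.span k ((fun m => monomial m (1:k)) ''
        ({trip (2*p) 0 0, trip p p 0, trip 0 (2*p) 0, trip p 0 p, trip 0 p p}
          : Set (Fin 3 →₀ ℕ))))) = 3 := by
  classical
  haveI := Fact.mk hp
  have hp1 : 1 ≤ p := hp.one_lt.le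
  set a₀ := coeff (Finsupp.single 0 1) ℓ with ha₀
  set a₁ := coeff (Finsupp.single 1 1) ℓ with ha₁
  set c := coeff (Finsupp.single 2 1) ℓ with hcc
  set α := (c⁻¹)^p with hα
  set Q := ((Ideal.span {ℓ}).mkQ).restrictScalars k with hQ
  rw [Submodule.map_span]
  have himg : Q '' ((fun m => monomial m (1:k)) ''
      ({trip (2*p) 0 0, trip p p 0, trip 0 (2*p) 0, trip p 0 p, trip 0 p p}
        : Set (Fin 3 →₀ ℕ)))
      = {Q (X 0^(2*p)), Q (X 0^p * X 1^p), Q (X 1^(2*p)),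
          Q (X 0^p * X 2^p), Q (X 1^p * X 2^p)} := by
    simp only [Set.image_insert_eq, Set.image_singleton, monomial_trip, pow_zero, mul_one, one_mul]
  rw [himg]
  have hlp : ℓ^p = C (a₀^p) * X 0^p + C (a₁^p) * X 1^p + C (c^p) * X 2^p := by
    conv_lhs => rw [linear_form_decomp ℓ hl]
    exact pow_p_linear hp a₀ a₁ c
  have hQzero : ∀ f ∈ Ideal.span {ℓ}, Q f = 0 := by
    intro f hf
    rw [hQ, LinearMap.restrictScalars_apply, Submodule.mkQ_apply, Submodule.Quotient.mk_eq_zero]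
    exact hf
  have hcp : (C α : MvPolynomial (Fin 3) k) * C (c^p) = 1 := by
    rw [← C_mul, hα, ← mul_pow, inv_mul_cancel₀ hc, one_pow, map_one]
  have hppow : ℓ^(p-1) * ℓ = ℓ^p := by
    rw [← pow_succ]
    congr 1
    omega
  have hxx : (X 0 : MvPolynomial (Fin 3) k)^p * X 0^p = X 0^(2*p) := by
    rw [← pow_add]; congr 1; omega
  have hyy : (X 1 : MvPolynomial (Fin 3) k)^p * X 1^p = X 1^(2*p) := by
    rw [← pow_add]; congr 1; omega
  have key4 : X 0^p * X 2^p + C (α*a₀^p) * X 0^(2*p) + C (α*a₁^p) * (X 0^p * X 1^p)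
      ∈ Ideal.span {ℓ} := by
    have hident : X 0^p * X 2^p + C (α*a₀^p) * X 0^(2*p) + C (α*a₁^p) * (X 0^p * X 1^p)
        = (C α * X 0^p * ℓ^(p-1)) * ℓ := by
      rw [mul_assoc, hppow, hlp, ← hxx]
      simp only [C_mul]
      linear_combination (-((X 0:MvPolynomial (Fin 3) k)^p * X 2^p)) * hcp
    rw [hident]
    exact Ideal.mem_span_singleton'.mpr ⟨_, rfl⟩
  have key5 : X 1^p * X 2^p + C (α*a₀^p) * (X 0^p * X 1^p) + C (α*a₁^p) * X 1^(2*p)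
      ∈ Ideal.span {ℓ} := by
    have hident : X 1^p * X 2^p + C (α*a₀^p) * (X 0^p * X 1^p) + C (α*a₁^p) * X 1^(2*p)
        = (C α * X 1^p * ℓ^(p-1)) * ℓ := by
      rw [mul_assoc, hppow, hlp, ← hyy]
      simp only [C_mul]
      linear_combination (-((X 1:MvPolynomial (Fin 3) k)^p * X 2^p)) * hcp
    rw [hident]
    exact Ideal.mem_span_singleton'.mpr ⟨_, rfl⟩
  have hm4 : Q (X 0^p * X 2^p) ∈ Submodule.span k
      ({Q (X 0^(2*p)), Q (X 0^p * X 1^p), Q (X 1^(2*p))} : Set _) := by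
    have h0 := hQzero _ key4
    rw [← smul_eq_C_mul, ← smul_eq_C_mul, map_add, map_add, map_smul, map_smul] at h0
    rw [add_assoc] at h0
    rw [eq_neg_of_add_eq_zero_left h0]
    refine neg_mem (add_mem (Submodule.smul_mem _ _ (Submodule.subset_span ?_))
      (Submodule.smul_mem _ _ (Submodule.subset_span ?_)))
    · exact Or.inl rfl
    · exact Or.inr (Or.inl rfl)
  have hm5 : Q (X 1^p * X 2^p) ∈ Submodule.span k
      ({Q (X 0^(2*p)), Q (X 0^p * X 1^p), Q (X 1^(2*p))} : Set _) := by
    have h0 := hQzero _ key5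
    rw [← smul_eq_C_mul, ← smul_eq_C_mul, map_add, map_add, map_smul, map_smul] at h0
    rw [add_assoc] at h0
    rw [eq_neg_of_add_eq_zero_left h0]
    refine neg_mem (add_mem (Submodule.smul_mem _ _ (Submodule.subset_span ?_))
      (Submodule.smul_mem _ _ (Submodule.subset_span ?_)))
    · exact Or.inr (Or.inl rfl)
    · exact Or.inr (Or.inr rfl)
  have hspan : Submodule.span k ({Q (X 0^(2*p)), Q (X 0^p * X 1^p), Q (X 1^(2*p)),
        Q (X 0^p * X 2^p), Q (X 1^p * X 2^p)} : Set _)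
      = Submodule.span k ({Q (X 0^(2*p)), Q (X 0^p * X 1^p), Q (X 1^(2*p))} : Set _) := by
    apply le_antisymm
    · rw [Submodule.span_le]
      rintro x (rfl|rfl|rfl|rfl|rfl)
      · exact Submodule.subset_span (Or.inl rfl)
      · exact Submodule.subset_span (Or.inr (Or.inl rfl))
      · exact Submodule.subset_span (Or.inr (Or.inr rfl))
      · exact hm4
      · exact hm5
    · apply Submodule.span_mono
      rintro x (rfl|rfl|rfl)
      · exact Or.inl rfl
      · exact Or.inr (Or.inl rfl)
      · exact Or.inr (Or.inr (Or.inl rfl))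
  rw [hspan]
  -- linear independence of the three surviving classes
  set φ : MvPolynomial (Fin 3) k →ₐ[k] MvPolynomial (Fin 3) k :=
    aeval ![X 0, X 1, C (-(c⁻¹)) * (C a₀ * X 0 + C a₁ * X 1)] with hφdef
  have hφ : φ ℓ = 0 := subst_linear_eq_zero ℓ hl hc
  have hφ0 : φ (X 0) = X 0 := by rw [hφdef, aeval_X]; rfl
  have hφ1 : φ (X 1) = X 1 := by rw [hφdef, aeval_X]; rfl
  set e : Fin 3 → (Fin 3 →₀ ℕ) := ![trip (2*p) 0 0, trip p p 0, trip 0 (2*p) 0] with he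
  have hinj : Function.Injective e := by
    intro i j hij
    fin_cases i <;> fin_cases j <;> first
      | rfl
      | (have h2 := trip_eq_iff.mp hij; omega)
  have hfixgen : ∀ x y : ℕ, φ (monomial (trip x y 0) (1:k)) = monomial (trip x y 0) (1:k) := by
    intro x y
    rw [monomial_trip]
    simp [map_mul, map_pow, hφ0, hφ1]
  have hfix : ∀ i, φ (monomial (e i) (1:k)) = monomial (e i) (1:k) := by
    intro i
    fin_cases i <;> exact hfixgen _ _
  have hli := indep_mod ℓ φ hφ (fun i => monomial (e i) (1:k)) hfix (li_monomials e hinj)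
  have hrange : ({Q (X 0^(2*p)), Q (X 0^p * X 1^p), Q (X 1^(2*p))} : Set _)
      = Set.range (fun i => ((Ideal.span {ℓ}).mkQ.restrictScalars k) (monomial (e i) (1:k))) := by
    rw [range_fin3]
    simp only [he, Matrix.cons_val_zero, Matrix.cons_val_one, Matrix.head_cons,
      Matrix.cons_val_two, Matrix.tail_cons, monomial_trip, pow_zero, mul_one, one_mul]
    rfl
  rw [hrange, finrank_span_eq_card hli, Fintype.card_fin]

set_option maxHeartbeats 1000000 in
lemma rankL {p : ℕ} (hp1 : 2 ≤ p) :
    Module.finrank k ↥(Submodule.map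
      (((Ideal.span {(X 2 : MvPolynomial (Fin 3) k)}).mkQ).restrictScalars k)
      (Submodule.span k ((fun m => monomial m (1:k)) ''
        ({trip (2*p) 0 0, trip (2*p-1) 1 0, trip (2*p-1) 0 1, trip (2*p-2) 2 0, trip 0 (2*p) 0}
          : Set (Fin 3 →₀ ℕ))))) = 4 := by
  classical
  set Q := ((Ideal.span {(X 2 : MvPolynomial (Fin 3) k)}).mkQ).restrictScalars k with hQ
  rw [Submodule.map_span]
  have himg : Q '' ((fun m => monomial m (1:k)) ''
      ({trip (2*p) 0 0, trip (2*p-1) 1 0, trip (2*p-1) 0 1, trip (2*p-2) 2 0, trip 0 (2*p) 0}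
        : Set (Fin 3 →₀ ℕ)))
      = {Q (X 0^(2*p)), Q (X 0^(2*p-1) * X 1), Q (X 0^(2*p-1) * X 2),
          Q (X 0^(2*p-2) * X 1^2), Q (X 1^(2*p))} := by
    simp only [Set.image_insert_eq, Set.image_singleton, monomial_trip, pow_zero, pow_one,
      mul_one, one_mul]
  rw [himg]
  have hQzero : ∀ f ∈ Ideal.span {(X 2 : MvPolynomial (Fin 3) k)}, Q f = 0 := by
    intro f hf
    rw [hQ, LinearMap.restrictScalars_apply, Submodule.mkQ_apply, Submodule.Quotient.mk_eq_zero]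
    exact hf
  have hm3 : Q (X 0^(2*p-1) * X 2) ∈ Submodule.span k
      ({Q (X 0^(2*p)), Q (X 0^(2*p-1) * X 1), Q (X 0^(2*p-2) * X 1^2), Q (X 1^(2*p))} : Set _) := by
    have h0 : Q (X 0^(2*p-1) * X 2) = 0 :=
      hQzero _ (Ideal.mem_span_singleton'.mpr ⟨_, rfl⟩)
    rw [h0]
    exact zero_mem _
  have hspan : Submodule.span k ({Q (X 0^(2*p)), Q (X 0^(2*p-1) * X 1), Q (X 0^(2*p-1) * X 2),
        Q (X 0^(2*p-2) * X 1^2), Q (X 1^(2*p))} : Set _)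
      = Submodule.span k ({Q (X 0^(2*p)), Q (X 0^(2*p-1) * X 1),
          Q (X 0^(2*p-2) * X 1^2), Q (X 1^(2*p))} : Set _) := by
    apply le_antisymm
    · rw [Submodule.span_le]
      rintro x (rfl|rfl|rfl|rfl|rfl)
      · exact Submodule.subset_span (Or.inl rfl)
      · exact Submodule.subset_span (Or.inr (Or.inl rfl))
      · exact hm3
      · exact Submodule.subset_span (Or.inr (Or.inr (Or.inl rfl)))
      · exact Submodule.subset_span (Or.inr (Or.inr (Or.inr rfl)))
    · apply Submodule.span_mono
      rintro x (rfl|rfl|rfl|rfl)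
      · exact Or.inl rfl
      · exact Or.inr (Or.inl rfl)
      · exact Or.inr (Or.inr (Or.inr (Or.inl rfl)))
      · exact Or.inr (Or.inr (Or.inr (Or.inr rfl)))
  rw [hspan]
  set φ : MvPolynomial (Fin 3) k →ₐ[k] MvPolynomial (Fin 3) k :=
    aeval ![X 0, X 1, 0] with hφdef
  have hφ : φ (X 2) = 0 := by rw [hφdef, aeval_X]; rfl
  have hφ0 : φ (X 0) = X 0 := by rw [hφdef, aeval_X]; rfl
  have hφ1 : φ (X 1) = X 1 := by rw [hφdef, aeval_X]; rfl
  set e : Fin 4 → (Fin 3 →₀ ℕ) :=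
    ![trip (2*p) 0 0, trip (2*p-1) 1 0, trip (2*p-2) 2 0, trip 0 (2*p) 0] with he
  have hinj : Function.Injective e := by
    intro i j hij
    fin_cases i <;> fin_cases j <;> first
      | rfl
      | (have h2 := trip_eq_iff.mp hij; omega)
  have hfixgen : ∀ x y : ℕ, φ (monomial (trip x y 0) (1:k)) = monomial (trip x y 0) (1:k) := by
    intro x y
    rw [monomial_trip]
    simp [map_mul, map_pow, hφ0, hφ1]
  have hfix : ∀ i, φ (monomial (e i) (1:k)) = monomial (e i) (1:k) := by
    intro i
    fin_cases i <;> exact hfixgen _ _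
  have hli := indep_mod (X 2) φ hφ (fun i => monomial (e i) (1:k)) hfix (li_monomials e hinj)
  have hrange : ({Q (X 0^(2*p)), Q (X 0^(2*p-1) * X 1), Q (X 0^(2*p-2) * X 1^2), Q (X 1^(2*p))}
        : Set _)
      = Set.range (fun i =>
          ((Ideal.span {(X 2 : MvPolynomial (Fin 3) k)}).mkQ.restrictScalars k)
            (monomial (e i) (1:k))) := by
    rw [range_fin4]
    simp only [he, Matrix.cons_val_zero, Matrix.cons_val_one, Matrix.head_cons,
      Matrix.cons_val_two, Matrix.tail_cons, Matrix.cons_val_three, monomial_trip, pow_zero,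
      pow_one, mul_one, one_mul]
    rfl
  rw [hrange, finrank_span_eq_card hli, Fintype.card_fin]


lemma I_span {p : ℕ} :
    (Ideal.span {(X 0 : MvPolynomial (Fin 3) k) ^ (2 * p), X 0 ^ p * X 1 ^ p, X 1 ^ (2 * p),
        X 0 ^ p * X 2 ^ p, X 1 ^ p * X 2 ^ p})
      = Ideal.span ((fun m => monomial m (1:k)) ''
          ({trip (2*p) 0 0, trip p p 0, trip 0 (2*p) 0, trip p 0 p, trip 0 p p}
            : Set (Fin 3 →₀ ℕ))) := by
  congr 1
  simp only [Set.image_insert_eq, Set.image_singleton, monomial_trip, pow_zero, mul_one, one_mul]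

lemma TI_eq {p : ℕ} :
    {m : Fin 3 →₀ ℕ | expDeg m = 2*p ∧
        ∃ a ∈ ({trip (2*p) 0 0, trip p p 0, trip 0 (2*p) 0, trip p 0 p, trip 0 p p}
          : Set (Fin 3 →₀ ℕ)), a ≤ m}
      = {trip (2*p) 0 0, trip p p 0, trip 0 (2*p) 0, trip p 0 p, trip 0 p p} := by
  ext m
  simp only [Set.mem_setOf_eq]
  constructor
  · rintro ⟨hdeg, a, ha, hle⟩
    have had : expDeg a = 2*p := by
      rcases ha with rfl|rfl|rfl|rfl|rfl <;> rw [expDeg_trip] <;> omega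
    rw [← le_expDeg_eq hle (by omega)]
    exact ha
  · intro hm
    refine ⟨?_, m, hm, le_rfl⟩
    rcases hm with rfl|rfl|rfl|rfl|rfl <;> rw [expDeg_trip] <;> omega

lemma AI_ncard {p : ℕ} (hp1 : 1 ≤ p) :
    ({trip (2*p) 0 0, trip p p 0, trip 0 (2*p) 0, trip p 0 p, trip 0 p p}
      : Set (Fin 3 →₀ ℕ)).ncard = 5 := by
  apply ncard_five <;>
    simp only [Set.mem_insert_iff, Set.mem_singleton_iff, not_or, trip_eq_iff] <;> omega

lemma AI_finite {p : ℕ} :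
    ({trip (2*p) 0 0, trip p p 0, trip 0 (2*p) 0, trip p 0 p, trip 0 p p}
      : Set (Fin 3 →₀ ℕ)).Finite :=
  ((((Set.finite_singleton _).insert _).insert _).insert _).insert _

lemma powers_eq {p : ℕ} :
    powersIdeal k (![((2 * p : ℕ) : ℕ∞), ((2 * p : ℕ) : ℕ∞), ⊤])
      = Ideal.span ((fun m => monomial m (1:k)) ''
          ({trip (2*p) 0 0, trip 0 (2*p) 0} : Set (Fin 3 →₀ ℕ))) := by
  unfold powersIdeal
  congr 1
  ext f
  constructor
  · rintro ⟨i, e, hde, rfl⟩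
    fin_cases i
    · have hde' : ((2 * p : ℕ) : ℕ∞) = (e : ℕ∞) := hde
      have he2 : e = 2*p := by exact_mod_cast hde'.symm
      exact ⟨trip (2*p) 0 0, Or.inl rfl, by rw [← single0_eq_trip, he2]; rfl⟩
    · have hde' : ((2 * p : ℕ) : ℕ∞) = (e : ℕ∞) := hde
      have he2 : e = 2*p := by exact_mod_cast hde'.symm
      exact ⟨trip 0 (2*p) 0, Or.inr rfl, by rw [← single1_eq_trip, he2]; rfl⟩
    · have hde' : (⊤ : ℕ∞) = (e : ℕ∞) := hde
      exact absurd hde'.symm (by simp)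
  · rintro ⟨m, hm, rfl⟩
    rcases hm with rfl | rfl
    · exact ⟨0, 2*p, rfl, by rw [← single0_eq_trip]⟩
    · exact ⟨1, 2*p, rfl, by rw [← single1_eq_trip]⟩

lemma TL_eq {p : ℕ} (L₀ : Ideal (MvPolynomial (Fin 3) k)) (A₀ : Set (Fin 3 →₀ ℕ))
    (hA₀ : L₀ = Ideal.span ((fun m => monomial m (1:k)) '' A₀)) :
    {m : Fin 3 →₀ ℕ | expDeg m = 2*p ∧
        ∃ a ∈ A₀ ∪ {trip (2*p) 0 0, trip 0 (2*p) 0}, a ≤ m}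
      = {m : Fin 3 →₀ ℕ | expDeg m = 2*p ∧ monomial m (1:k) ∈ L₀}
        ∪ {trip (2*p) 0 0, trip 0 (2*p) 0} := by
  ext m
  simp only [Set.mem_setOf_eq, Set.mem_union, Set.mem_insert_iff, Set.mem_singleton_iff]
  constructor
  · rintro ⟨hdeg, a, ha, hle⟩
    rcases ha with ha | rfl | rfl
    · exact Or.inl ⟨hdeg, hA₀ ▸ monomial_mem_span_iff.mpr ⟨a, ha, hle⟩⟩
    · refine Or.inr (Or.inl ?_)
      rw [← le_expDeg_eq hle (by rw [expDeg_trip, hdeg]; omega)]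
    · refine Or.inr (Or.inr ?_)
      rw [← le_expDeg_eq hle (by rw [expDeg_trip, hdeg]; omega)]
  · rintro (⟨hdeg, hmem⟩ | rfl | rfl)
    · obtain ⟨a, ha, hle⟩ := monomial_mem_span_iff.mp (hA₀ ▸ hmem)
      exact ⟨hdeg, a, Or.inl ha, hle⟩
    · exact ⟨by rw [expDeg_trip]; omega, _, Or.inr (Or.inl rfl), le_rfl⟩
    · exact ⟨by rw [expDeg_trip]; omega, _, Or.inr (Or.inr rfl), le_rfl⟩

end CEx

/-- Let `char k = p > 0`, `S = k[x₁,x₂,x₃]`, and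
`I = (x₁^{2p}, x₁^p x₂^p, x₂^{2p}, x₁^p x₃^p, x₂^p x₃^p)`, with degree sequence
`d = (2p, 2p, ∞)`. Then for every linear form `ℓ` with nonzero coefficient of
`x₃`: the image of `[I]_{2p}` in `S/(ℓ)` is 3-dimensional while the image of
`[L^d(I)]_{2p}` in `S/(x₃)` is 4-dimensional; hence
`HF(I + (ℓ); 2p) < HF(L^d(I) + (x₃); 2p)` (so the characteristic-zero
hypothesis in the hyperplane restriction lemma is necessary). -/
theorem char_p_hyperplane_counterexample
    {k : Type*} [Field k] {p : ℕ} (hp : p.Prime) [CharP k p]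
    (I : Ideal (MvPolynomial (Fin 3) k))
    (hI : I = Ideal.span
      {X 0 ^ (2 * p), X 0 ^ p * X 1 ^ p, X 1 ^ (2 * p),
       X 0 ^ p * X 2 ^ p, X 1 ^ p * X 2 ^ p})
    (L : Ideal (MvPolynomial (Fin 3) k))
    (hL : IsLPP (![((2 * p : ℕ) : ℕ∞), ((2 * p : ℕ) : ℕ∞), ⊤]) L)
    (hLHF : ∀ j : ℕ, hfI L j = hfI I j)
    (ℓ : MvPolynomial (Fin 3) k) (hℓ : MvPolynomial.IsHomogeneous ℓ 1)
    (hc : MvPolynomial.coeff (Finsupp.single (2 : Fin 3) 1) ℓ ≠ 0) :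
    Module.finrank k
        ↥(Submodule.map (((Ideal.span {ℓ}).mkQ).restrictScalars k)
          (I.restrictScalars k ⊓ homogeneousSubmodule (Fin 3) k (2 * p))) = 3 ∧
    Module.finrank k
        ↥(Submodule.map (((Ideal.span {(X 2 : MvPolynomial (Fin 3) k)}).mkQ).restrictScalars k)
          (L.restrictScalars k ⊓ homogeneousSubmodule (Fin 3) k (2 * p))) = 4 ∧
    hfI (I ⊔ Ideal.span {ℓ}) (2 * p) <
      hfI (L ⊔ Ideal.span {(X 2 : MvPolynomial (Fin 3) k)}) (2 * p) := by
  classical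
  have hp1 : 1 ≤ p := hp.one_lt.le
  have hp2 : 2 ≤ p := hp.two_le
  have hIspan : I = Ideal.span ((fun m => monomial m (1:k)) ''
      ({CEx.trip (2*p) 0 0, CEx.trip p p 0, CEx.trip 0 (2*p) 0, CEx.trip p 0 p, CEx.trip 0 p p}
        : Set (Fin 3 →₀ ℕ))) := by
    rw [hI]; exact CEx.I_span
  have hVI : I.restrictScalars k ⊓ homogeneousSubmodule (Fin 3) k (2*p)
      = Submodule.span k ((fun m => monomial m (1:k)) ''
          ({CEx.trip (2*p) 0 0, CEx.trip p p 0, CEx.trip 0 (2*p) 0, CEx.trip p 0 p,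
            CEx.trip 0 p p} : Set (Fin 3 →₀ ℕ))) := by
    rw [hIspan, CEx.inf_homog_eq_span, CEx.TI_eq]
  have hdimI : hfI I (2*p) = 5 := by
    unfold hfI
    rw [hVI, CEx.finrank_span_monomials _ CEx.AI_finite, CEx.AI_ncard hp1]
  have hc1 : Module.finrank k
      ↥(Submodule.map (((Ideal.span {ℓ}).mkQ).restrictScalars k)
        (I.restrictScalars k ⊓ homogeneousSubmodule (Fin 3) k (2 * p))) = 3 := by
    rw [hVI]
    exact CEx.rankI hp ℓ hℓ hc
  -- the L side
  obtain ⟨L₀, hlex, hLdef⟩ := hL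
  obtain ⟨A₀, hA₀⟩ := hlex.1
  have hLspan : L = Ideal.span ((fun m => monomial m (1:k)) ''
      (A₀ ∪ {CEx.trip (2*p) 0 0, CEx.trip 0 (2*p) 0})) := by
    rw [hLdef, hA₀, CEx.powers_eq, ← Ideal.span_union, ← Set.image_union]
  have hVL : L.restrictScalars k ⊓ homogeneousSubmodule (Fin 3) k (2*p)
      = Submodule.span k ((fun m => monomial m (1:k)) ''
          ({m : Fin 3 →₀ ℕ | expDeg m = 2*p ∧ monomial m (1:k) ∈ L₀}
            ∪ {CEx.trip (2*p) 0 0, CEx.trip 0 (2*p) 0})) := by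
    rw [hLspan, CEx.inf_homog_eq_span, CEx.TL_eq L₀ A₀ hA₀]
  have hTfin : ({m : Fin 3 →₀ ℕ | expDeg m = 2*p ∧ monomial m (1:k) ∈ L₀}
      ∪ {CEx.trip (2*p) 0 0, CEx.trip 0 (2*p) 0}).Finite := by
    apply (CEx.finite_deg 3 (2*p)).subset
    rintro m (hm | rfl | rfl)
    · exact hm.1
    · exact (CEx.expDeg_trip _ _ _).trans (by omega)
    · exact (CEx.expDeg_trip _ _ _).trans (by omega)
  have hcard : ({m : Fin 3 →₀ ℕ | expDeg m = 2*p ∧ monomial m (1:k) ∈ L₀}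
      ∪ {CEx.trip (2*p) 0 0, CEx.trip 0 (2*p) 0}).ncard = 5 := by
    have h5 : hfI L (2*p) = 5 := by rw [hLHF, hdimI]
    unfold hfI at h5
    rwa [hVL, CEx.finrank_span_monomials _ hTfin] at h5
  have hE := CEx.T0_determined hp2 {m : Fin 3 →₀ ℕ | expDeg m = 2*p ∧ monomial m (1:k) ∈ L₀}
    (fun m hm => hm.1)
    (fun u v hLex hv hdu => ⟨hdu, hlex.2 u v (by rw [hdu, hv.1]) hLex hv.2⟩)
    hcard
  have hVL5 : L.restrictScalars k ⊓ homogeneousSubmodule (Fin 3) k (2*p)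
      = Submodule.span k ((fun m => monomial m (1:k)) ''
          ({CEx.trip (2*p) 0 0, CEx.trip (2*p-1) 1 0, CEx.trip (2*p-1) 0 1, CEx.trip (2*p-2) 2 0,
            CEx.trip 0 (2*p) 0} : Set (Fin 3 →₀ ℕ))) := by
    rw [hVL, hE]
  have hc2 : Module.finrank k
      ↥(Submodule.map (((Ideal.span {(X 2 : MvPolynomial (Fin 3) k)}).mkQ).restrictScalars k)
        (L.restrictScalars k ⊓ homogeneousSubmodule (Fin 3) k (2 * p))) = 4 := by
    rw [hVL5]
    exact CEx.rankL hp2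
  refine ⟨hc1, hc2, ?_⟩
  -- the Hilbert function inequality
  have hl0 : ℓ ≠ 0 := fun h => hc (by rw [h, coeff_zero])
  have hX2 : (X 2 : MvPolynomial (Fin 3) k).IsHomogeneous 1 := isHomogeneous_X k 2
  have hX2ne : (X 2 : MvPolynomial (Fin 3) k) ≠ 0 := X_ne_zero 2
  have e2p : 2*p - 1 + 1 = 2*p := by omega
  have h3a := CEx.hf_sup I _ hIspan ℓ hℓ (2*p-1)
  rw [e2p] at h3a
  have h3b := CEx.hf_sup L _ hLspan (X 2) hX2 (2*p-1)
  rw [e2p] at h3b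
  have hWl := CEx.finrank_W ℓ hℓ hl0 (2*p-1)
  rw [e2p] at hWl
  have hWx := CEx.finrank_W (X 2) hX2 hX2ne (2*p-1)
  rw [e2p] at hWx
  unfold hfI
  rw [h3a, h3b, hc1, hc2, hWl, hWx]
  omega
end
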